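/- arXiv:2304.13790 — 7 statements merged into one kernel-verified Lean document; each statement's English description precedes it below -/
import Mathlib

section
/- There exists a universal constant C > 0 such that for every integer n ≥ 1 and all reals t₁, t₂ > 0, (1/n) · ∑_{x=0}^{∞} (x/n)² · exp(−(x/n)²/(2t₁)) · exp(−(x/n)²/(2t₂)) ≤ C · t₁^{3/4} · t₂^{3/4}. -/
open MeasureTheory Real

lemma aux_ptwise (a v : ℝ) (ha : 0 < a) (hv : 0 ≤ v) :
    v * Real.exp (-(a * v)) ≤ 2 / (Real.exp 1 * a) * Real.exp (-(a / 2 * v)) := by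
  have hE : Real.exp (-(a * v)) = Real.exp (-(a / 2 * v)) * Real.exp (-(a / 2 * v)) := by
    rw [← Real.exp_add]; ring_nf
  rw [hE, ← mul_assoc]
  have hEpos : 0 < Real.exp (-(a / 2 * v)) := Real.exp_pos _
  refine mul_le_mul_of_nonneg_right ?_ hEpos.le
  have he : (0:ℝ) < Real.exp 1 := Real.exp_pos 1
  have hx : 0 < Real.exp (a / 2 * v) := Real.exp_pos _
  have h : a / 2 * v ≤ Real.exp (a / 2 * v) / Real.exp 1 := by
    have := Real.add_one_le_exp (a / 2 * v - 1)
    rw [Real.exp_sub] at this; linarith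
  have hinv : Real.exp (-(a / 2 * v)) * Real.exp (a / 2 * v) = 1 := by
    rw [← Real.exp_add]; simp
  have h3 : a / 2 * v * Real.exp (-(a / 2 * v)) ≤ 1 / Real.exp 1 := by
    have h4 := mul_le_mul_of_nonneg_right h hEpos.le
    calc a / 2 * v * Real.exp (-(a / 2 * v))
        ≤ Real.exp (a / 2 * v) / Real.exp 1 * Real.exp (-(a / 2 * v)) := h4
      _ = (Real.exp (-(a / 2 * v)) * Real.exp (a / 2 * v)) / Real.exp 1 := by ring
      _ = 1 / Real.exp 1 := by rw [hinv]
  have heq : v * Real.exp (-(a / 2 * v)) = 2 / a * (a / 2 * v * Real.exp (-(a / 2 * v))) := by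
    field_simp
  rw [heq]
  calc 2 / a * (a / 2 * v * Real.exp (-(a / 2 * v)))
      ≤ 2 / a * (1 / Real.exp 1) := by
        exact mul_le_mul_of_nonneg_left h3 (by positivity)
    _ = 2 / (Real.exp 1 * a) := by field_simp

lemma aux_summable (c : ℝ) (hc : 0 < c) :
    Summable (fun x : ℕ => Real.exp (-(c * ((x:ℝ)+1)^2))) := by
  apply Summable.of_nonneg_of_le (fun x => (Real.exp_pos _).le)
    (fun x => ?_) (summable_geometric_of_lt_one (Real.exp_pos (-c)).le
      (Real.exp_lt_one_iff.2 (by linarith)))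
  have h1 : Real.exp (-c) ^ x = Real.exp (-(c * x)) := by
    rw [← Real.exp_nat_mul]; ring_nf
  rw [h1, Real.exp_le_exp, neg_le_neg_iff]
  have : (x:ℝ) ≤ ((x:ℝ)+1)^2 := by nlinarith [Nat.cast_nonneg (α := ℝ) x]
  nlinarith

lemma aux_sum_le (c : ℝ) (hc : 0 < c) :
    (∑' x : ℕ, Real.exp (-(c * ((x:ℝ)+1)^2))) ≤ Real.sqrt (π / c) / 2 := by
  apply Summable.tsum_le_of_sum_range_le (aux_summable c hc)
  intro N
  have hanti : AntitoneOn (fun u : ℝ => Real.exp (-(c * u^2))) (Set.Icc (0:ℝ) (0 + (N:ℕ))) := by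
    intro x hx y hy hxy
    simp only [Real.exp_le_exp, neg_le_neg_iff]
    have hx0 : (0:ℝ) ≤ x := hx.1
    have : x^2 ≤ y^2 := by nlinarith
    nlinarith
  have h1 := AntitoneOn.sum_le_integral (x₀ := (0:ℝ)) (a := N)
    (f := fun u : ℝ => Real.exp (-(c * u^2))) hanti
  have h2 : (∑ i ∈ Finset.range N, Real.exp (-(c * ((i:ℝ)+1)^2)))
      = ∑ i ∈ Finset.range N, (fun u : ℝ => Real.exp (-(c * u^2))) ((0:ℝ) + ((i+1 : ℕ) : ℝ)) := by
    apply Finset.sum_congr rfl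
    intro i _; simp only; push_cast; ring_nf
  rw [h2]
  refine h1.trans ?_
  rw [zero_add, intervalIntegral.integral_of_le (by positivity)]
  have hint : IntegrableOn (fun u : ℝ => Real.exp (-(c * u^2))) (Set.Ioi 0) := by
    have h5 : Integrable (fun u : ℝ => Real.exp (-c * u^2)) := integrable_exp_neg_mul_sq hc
    have h6 : (fun u : ℝ => Real.exp (-(c * u^2))) = fun u : ℝ => Real.exp (-c * u^2) := by
      ext u; ring_nf
    rw [h6]
    exact h5.integrableOn
  have hmono : (∫ u in Set.Ioc (0:ℝ) (N:ℝ), Real.exp (-(c * u^2)))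
      ≤ ∫ u in Set.Ioi (0:ℝ), Real.exp (-(c * u^2)) := by
    apply setIntegral_mono_set hint
    · filter_upwards with x using (Real.exp_pos _).le
    · exact HasSubset.Subset.eventuallyLE Set.Ioc_subset_Ioi_self
  refine hmono.trans ?_
  have h7 : (∫ u in Set.Ioi (0:ℝ), Real.exp (-(c * u^2)))
      = ∫ u in Set.Ioi (0:ℝ), Real.exp (-c * u^2) := by
    congr 1; ext u; ring_nf
  rw [h7, integral_gaussian_Ioi c]

lemma aux_summable0 (c : ℝ) (hc : 0 < c) :
    Summable (fun x : ℕ => Real.exp (-(c * (x:ℝ)^2))) := by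
  apply Summable.of_nonneg_of_le (fun x => (Real.exp_pos _).le)
    (fun x => ?_) (summable_geometric_of_lt_one (Real.exp_pos (-c)).le
      (Real.exp_lt_one_iff.2 (by linarith)))
  have h1 : Real.exp (-c) ^ x = Real.exp (-(c * x)) := by
    rw [← Real.exp_nat_mul]; ring_nf
  rw [h1, Real.exp_le_exp, neg_le_neg_iff]
  have h2 : (x:ℝ) ≤ (x:ℝ)^2 := by
    have : (1:ℝ) ≤ x ∨ (x:ℝ) = 0 := by
      rcases Nat.eq_zero_or_pos x with h | h
      · right; simp [h]
      · left; exact_mod_cast h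
    rcases this with h | h
    · nlinarith
    · simp [h]
  nlinarith

set_option maxHeartbeats 1600000 in
/-- Riemann sum bound: `(1/n) ∑_{x ≥ 0} (x/n)² e^{-(x/n)²/(2t₁)} e^{-(x/n)²/(2t₂)}
≤ C t₁^{3/4} t₂^{3/4}` uniformly in `n ≥ 1` and `t₁, t₂ > 0`. -/
theorem stmt3 : ∃ C > (0:ℝ), ∀ n : ℕ, 1 ≤ n → ∀ t₁ > (0:ℝ), ∀ t₂ > (0:ℝ),
    (1/(n:ℝ)) * ∑' x : ℕ, ((x:ℝ)/n)^2 * Real.exp (-((x:ℝ)/n)^2 / (2*t₁)) *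
        Real.exp (-((x:ℝ)/n)^2 / (2*t₂))
      ≤ C * t₁ ^ ((3:ℝ)/4) * t₂ ^ ((3:ℝ)/4) := by
  refine ⟨1, one_pos, ?_⟩
  intro n hn t₁ ht₁ t₂ ht₂
  have hn0 : (0:ℝ) < n := by
    have h := Nat.cast_pos (α := ℝ) |>.mpr hn
    exact h
  set a : ℝ := 1/(2*t₁) + 1/(2*t₂) with ha_def
  have ha : 0 < a := by positivity
  set c : ℝ := a / (2 * (n:ℝ)^2) with hc_def
  have hc : 0 < c := by positivity
  set G : ℕ → ℝ := fun x => ((x:ℝ)/n)^2 * Real.exp (-(a * ((x:ℝ)/n)^2)) with hG_def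
  have he : (0:ℝ) < Real.exp 1 := Real.exp_pos 1
  -- rewrite the tsum
  have htsum_eq : (∑' x : ℕ, ((x:ℝ)/n)^2 * Real.exp (-((x:ℝ)/n)^2 / (2*t₁)) *
      Real.exp (-((x:ℝ)/n)^2 / (2*t₂))) = ∑' x : ℕ, G x := by
    apply tsum_congr
    intro x
    rw [hG_def]
    simp only [mul_assoc, ← Real.exp_add]
    congr 2
    rw [ha_def]
    field_simp
    ring
  -- pointwise bound
  have hbound : ∀ x : ℕ, G x ≤ 2 / (Real.exp 1 * a) * Real.exp (-(c * (x:ℝ)^2)) := by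
    intro x
    have harg : a / 2 * ((x:ℝ)/n)^2 = c * (x:ℝ)^2 := by
      rw [hc_def]; field_simp
    have h := aux_ptwise a (((x:ℝ)/n)^2) ha (by positivity)
    rwa [harg] at h
  have hGnonneg : ∀ x : ℕ, 0 ≤ G x := fun x => by
    rw [hG_def]; positivity
  have hG : Summable G :=
    Summable.of_nonneg_of_le hGnonneg hbound ((aux_summable0 c hc).mul_left _)
  have hG0 : G 0 = 0 := by simp [hG_def]
  -- sum bound
  have hsum : (∑' x : ℕ, G x) ≤ 2 / (Real.exp 1 * a) * (Real.sqrt (π / c) / 2) := by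
    rw [Summable.tsum_eq_zero_add hG, hG0, zero_add]
    have hshift : Summable (fun x : ℕ => G (x + 1)) :=
      hG.comp_injective (add_left_injective 1)
    calc (∑' x : ℕ, G (x + 1))
        ≤ ∑' x : ℕ, 2 / (Real.exp 1 * a) * Real.exp (-(c * ((x:ℝ)+1)^2)) := by
          apply Summable.tsum_le_tsum _ hshift ((aux_summable c hc).mul_left _)
          intro x
          have h := hbound (x + 1)
          push_cast at h
          exact h
      _ = 2 / (Real.exp 1 * a) * ∑' x : ℕ, Real.exp (-(c * ((x:ℝ)+1)^2)) := tsum_mul_left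
      _ ≤ 2 / (Real.exp 1 * a) * (Real.sqrt (π / c) / 2) := by
          exact mul_le_mul_of_nonneg_left (aux_sum_le c hc) (by positivity)
  -- compute sqrt(π/c) = n * sqrt(2π/a)
  have hsc : Real.sqrt (π / c) = n * Real.sqrt (2 * π / a) := by
    have h1 : π / c = (n:ℝ)^2 * (2 * π / a) := by
      rw [hc_def]; field_simp
    rw [h1, Real.sqrt_mul (by positivity), Real.sqrt_sq hn0.le]
  -- assemble
  have hmain : (1/(n:ℝ)) * ∑' x : ℕ, G x ≤ Real.sqrt (2 * π / a) / (Real.exp 1 * a) := by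
    calc (1/(n:ℝ)) * ∑' x : ℕ, G x
        ≤ (1/(n:ℝ)) * (2 / (Real.exp 1 * a) * (Real.sqrt (π / c) / 2)) := by
          exact mul_le_mul_of_nonneg_left hsum (by positivity)
      _ = Real.sqrt (2 * π / a) / (Real.exp 1 * a) := by
          rw [hsc]; field_simp
  -- AM-GM step
  set r : ℝ := Real.sqrt (t₁ * t₂) with hr_def
  have hr : 0 < r := Real.sqrt_pos.2 (by positivity)
  have hrsq : r^2 = t₁ * t₂ := Real.sq_sqrt (by positivity)
  have hAM2 : 2 * r ≤ t₁ + t₂ := by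
    have h1 : r = Real.sqrt t₁ * Real.sqrt t₂ := Real.sqrt_mul ht₁.le t₂
    nlinarith [sq_nonneg (Real.sqrt t₁ - Real.sqrt t₂), Real.sq_sqrt ht₁.le,
      Real.sq_sqrt ht₂.le]
  have hra : 1 / r ≤ a := by
    have h1 : a = (t₁ + t₂) / (2 * (t₁ * t₂)) := by rw [ha_def]; field_simp; ring
    rw [h1, div_le_div_iff₀ hr (by positivity)]
    nlinarith [mul_le_mul_of_nonneg_right hAM2 hr.le]
  have hinva : 1 / a ≤ r := by
    rw [div_le_iff₀ ha]
    rw [div_le_iff₀ hr] at hra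
    nlinarith
  -- final bound
  have hfinal : Real.sqrt (2 * π / a) / (Real.exp 1 * a) ≤ t₁ ^ ((3:ℝ)/4) * t₂ ^ ((3:ℝ)/4) := by
    have hs1 : Real.sqrt (2 * π / a) ≤ Real.sqrt (2 * π) * Real.sqrt r := by
      rw [← Real.sqrt_mul (by positivity)]
      apply Real.sqrt_le_sqrt
      calc 2 * π / a = 2 * π * (1/a) := by ring
        _ ≤ 2 * π * r := by
            exact mul_le_mul_of_nonneg_left hinva (by positivity)
    have hrr : Real.sqrt r * r = (t₁ * t₂) ^ ((3:ℝ)/4) := by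
      have hp : (0:ℝ) ≤ t₁ * t₂ := by positivity
      have h2 : r = (t₁ * t₂) ^ ((1:ℝ)/2) := Real.sqrt_eq_rpow _
      have h3 : Real.sqrt r = (t₁ * t₂) ^ ((1:ℝ)/4) := by
        rw [h2, Real.sqrt_eq_rpow, ← Real.rpow_mul hp]
        norm_num
      rw [h3, h2, ← Real.rpow_add (by positivity)]
      norm_num
    have h2pi : Real.sqrt (2 * π) ≤ Real.exp 1 := by
      have hpi : π ≤ 3.15 := by linarith [Real.pi_lt_d2]
      have hexp : (2.71:ℝ) ≤ Real.exp 1 := by linarith [Real.exp_one_gt_d9]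
      have h4 : 2 * π ≤ (Real.exp 1)^2 := by
        nlinarith [hexp, hpi, sq_nonneg (Real.exp 1 - 2.71)]
      calc Real.sqrt (2 * π) ≤ Real.sqrt ((Real.exp 1)^2) := Real.sqrt_le_sqrt h4
        _ = Real.exp 1 := Real.sqrt_sq he.le
    calc Real.sqrt (2 * π / a) / (Real.exp 1 * a)
        = Real.sqrt (2 * π / a) * (1/a) * (1/Real.exp 1) := by field_simp
      _ ≤ (Real.sqrt (2 * π) * Real.sqrt r) * r * (1/Real.exp 1) := by
          apply mul_le_mul_of_nonneg_right _ (by positivity)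
          exact mul_le_mul hs1 hinva (by positivity) (by positivity)
      _ = (Real.sqrt (2 * π) / Real.exp 1) * (Real.sqrt r * r) := by ring
      _ ≤ 1 * (Real.sqrt r * r) := by
          apply mul_le_mul_of_nonneg_right _ (by positivity)
          rw [div_le_one he]; exact h2pi
      _ = (t₁ * t₂) ^ ((3:ℝ)/4) := by rw [one_mul, hrr]
      _ = t₁ ^ ((3:ℝ)/4) * t₂ ^ ((3:ℝ)/4) := Real.mul_rpow ht₁.le ht₂.le
  rw [htsum_eq, one_mul]
  exact hmain.trans hfinal
end

section
/- There exists a universal constant C > 0 such that for every integer n ≥ 1 and all reals γ > 0 and ε > 0, ∑_{x ∈ ℤ} ∫₀^∞ ∫₀^∞ e^{−γ(t₁+t₂)} · (ε²/n²) · t₁^{−3/2} · t₂^{−3/2} · (x/n)² · exp(−(x/n)²/(2t₁)) · exp(−(x/n)²/(2t₂)) dt₁ dt₂ ≤ C · ε² / (n · √γ). -/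
open MeasureTheory Set Real


lemma aux_eq {c : ℝ} {x : ℝ} (hx0 : 0 < x) :
    (|(-2:ℝ)| * x ^ ((-2:ℝ) - 1)) • ((x ^ (-2:ℝ)) ^ (-(3:ℝ)/2) * Real.exp (-c / x ^ (-2:ℝ)))
      = 2 * Real.exp (-c * x^2) := by
  have e0 : x ^ (-2:ℝ) = (x^2)⁻¹ := by
    rw [show (-2:ℝ) = ((-2:ℤ):ℝ) by norm_num, Real.rpow_intCast]
    simp [zpow_neg]
  have e1 : (x ^ (-2:ℝ)) ^ (-(3:ℝ)/2) = x ^ (3:ℝ) := by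
    rw [← Real.rpow_mul hx0.le]; norm_num
  have e2 : -c / x ^ (-2:ℝ) = -c * x^2 := by
    rw [e0]; field_simp
  have e3 : x ^ ((-2:ℝ) - 1) * x ^ (3:ℝ) = 1 := by
    rw [← Real.rpow_add hx0]; norm_num
  rw [e1, e2, smul_eq_mul]
  calc |(-2:ℝ)| * x ^ ((-2:ℝ)-1) * (x ^ (3:ℝ) * Real.exp (-c * x^2))
      = 2 * ((x ^ ((-2:ℝ)-1) * x ^ (3:ℝ)) * Real.exp (-c * x^2)) := by
        rw [abs_of_nonpos (by norm_num)]; ring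
    _ = 2 * Real.exp (-c * x^2) := by rw [e3, one_mul]

lemma key_integrable {c : ℝ} (hc : 0 < c) :
    IntegrableOn (fun t : ℝ => t ^ (-(3:ℝ)/2) * Real.exp (-c/t)) (Set.Ioi 0) := by
  have h2 : ((-2:ℝ)) ≠ 0 := by norm_num
  refine (integrableOn_Ioi_comp_rpow_iff
    (fun t : ℝ => t ^ (-(3:ℝ)/2) * Real.exp (-c/t)) h2).mp ?_
  have h : IntegrableOn (fun x : ℝ => 2 * Real.exp (-c * x^2)) (Set.Ioi 0) :=
    ((integrable_exp_neg_mul_sq hc).const_mul 2).integrableOn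
  exact h.congr_fun (fun x hx => (aux_eq (mem_Ioi.mp hx)).symm) measurableSet_Ioi

lemma key_integral {c : ℝ} (hc : 0 < c) :
    ∫ t in Set.Ioi (0:ℝ), t ^ (-(3:ℝ)/2) * Real.exp (-c/t) = Real.sqrt (π / c) := by
  have h2 : ((-2:ℝ)) ≠ 0 := by norm_num
  rw [← integral_comp_rpow_Ioi (fun t : ℝ => t ^ (-(3:ℝ)/2) * Real.exp (-c/t)) h2]
  rw [setIntegral_congr_fun measurableSet_Ioi
    (g := fun x : ℝ => 2 * Real.exp (-c * x^2)) (fun x hx => aux_eq (mem_Ioi.mp hx))]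
  rw [MeasureTheory.integral_const_mul, integral_gaussian_Ioi]
  ring

lemma pt_bound {γ a t : ℝ} (hγ : 0 < γ) (ha : 0 ≤ a) (ht : 0 < t) :
    Real.exp (-γ*t) * t ^ (-(3:ℝ)/2) * Real.exp (-a/(2*t))
      ≤ Real.exp (-Real.sqrt (γ*a)) * (t ^ (-(3:ℝ)/2) * Real.exp (-(a/4)/t)) := by
  have hp : (0:ℝ) ≤ t ^ (-(3:ℝ)/2) := Real.rpow_nonneg ht.le _
  have hu : (0:ℝ) ≤ γ * t := by positivity
  have hv : (0:ℝ) ≤ a / (4*t) := by positivity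
  have huv : γ * a = 4 * ((γ*t) * (a/(4*t))) := by field_simp
  have key : Real.sqrt (γ*a) ≤ γ*t + a/(4*t) := by
    have h4 : Real.sqrt (γ*a) = 2 * (Real.sqrt (γ*t) * Real.sqrt (a/(4*t))) := by
      rw [huv, show (4:ℝ) * ((γ*t) * (a/(4*t))) = (2*2) * ((γ*t) * (a/(4*t))) by norm_num,
        Real.sqrt_mul (by norm_num : (0:ℝ) ≤ 2*2), Real.sqrt_mul_self (by norm_num : (0:ℝ) ≤ 2),
        Real.sqrt_mul hu]
    nlinarith [sq_nonneg (Real.sqrt (γ*t) - Real.sqrt (a/(4*t))), Real.sq_sqrt hu, Real.sq_sqrt hv]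
  calc Real.exp (-γ*t) * t ^ (-(3:ℝ)/2) * Real.exp (-a/(2*t))
      = t ^ (-(3:ℝ)/2) * Real.exp (-γ*t + -a/(2*t)) := by rw [Real.exp_add]; ring
    _ ≤ t ^ (-(3:ℝ)/2) * Real.exp (-Real.sqrt (γ*a) + -(a/4)/t) := by
        refine mul_le_mul_of_nonneg_left (Real.exp_le_exp.mpr ?_) hp
        have h1 : -a/(2*t) = -(a/(4*t)) + -(a/4)/t := by ring
        have h2 : -(a/4)/t = -(a/4)/t := rfl
        nlinarith [key]
    _ = Real.exp (-Real.sqrt (γ*a)) * (t ^ (-(3:ℝ)/2) * Real.exp (-(a/4)/t)) := by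
        rw [Real.exp_add]; ring

lemma geom_bound {b : ℝ} (hb : 0 < b) :
    Real.exp (-b) * (1 - Real.exp (-b))⁻¹ ≤ 1/b := by
  have hq1 : Real.exp (-b) < 1 := Real.exp_lt_one_iff.mpr (by linarith)
  have h1q : 0 < 1 - Real.exp (-b) := by linarith
  rw [← div_eq_mul_inv, div_le_div_iff₀ h1q hb]
  have he : b + 1 ≤ Real.exp b := Real.add_one_le_exp b
  have hprod : Real.exp (-b) * Real.exp b = 1 := by
    rw [← Real.exp_add]; simp
  nlinarith [Real.exp_pos (-b)]


/-- Diagonal estimate: the summed double time integral is bounded by `C ε² / (n √γ)`. -/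
theorem stmt5 : ∃ C > (0:ℝ), ∀ n : ℕ, 1 ≤ n → ∀ γ > (0:ℝ), ∀ ε > (0:ℝ),
    ∑' x : ℤ, ∫ t₁ in Set.Ioi (0:ℝ), ∫ t₂ in Set.Ioi (0:ℝ),
        Real.exp (-γ * (t₁ + t₂)) * (ε^2 / (n:ℝ)^2) * t₁ ^ (-(3:ℝ)/2) * t₂ ^ (-(3:ℝ)/2) *
          ((x:ℝ)/n)^2 * Real.exp (-((x:ℝ)/n)^2 / (2*t₁)) * Real.exp (-((x:ℝ)/n)^2 / (2*t₂))
      ≤ C * ε^2 / ((n:ℝ) * Real.sqrt γ) := by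
  refine ⟨4 * π, by positivity, ?_⟩
  intro n hn γ hγ ε hε
  have hN0 : (0:ℝ) < (n:ℝ) := by exact_mod_cast Nat.lt_of_lt_of_le Nat.zero_lt_one hn
  have hsγ : 0 < Real.sqrt γ := Real.sqrt_pos.mpr hγ
  set N : ℝ := (n : ℝ) with hNdef
  set K : ℝ := ε^2 / N^2 with hKdef
  have hK0 : 0 < K := by positivity
  set b : ℝ := 2 * Real.sqrt γ / N with hbdef
  have hb0 : 0 < b := by positivity
  set q : ℝ := Real.exp (-b) with hqdef
  have hq0 : 0 < q := Real.exp_pos _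
  have hq1 : q < 1 := Real.exp_lt_one_iff.mpr (by linarith)
  set C0 : ℝ := 4 * π * K with hC0def
  have hC00 : 0 < C0 := by positivity
  set B : ℤ → ℝ := fun x => if x = 0 then 0 else C0 * q ^ x.natAbs with hBdef
  -- main pointwise bound
  have hmain : ∀ x : ℤ,
      (∫ t₁ in Set.Ioi (0:ℝ), ∫ t₂ in Set.Ioi (0:ℝ),
        Real.exp (-γ * (t₁ + t₂)) * K * t₁ ^ (-(3:ℝ)/2) * t₂ ^ (-(3:ℝ)/2) *
          ((x:ℝ)/N)^2 * Real.exp (-((x:ℝ)/N)^2 / (2*t₁)) * Real.exp (-((x:ℝ)/N)^2 / (2*t₂)))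
      ≤ B x := by
    intro x
    by_cases hx : x = 0
    · subst hx
      simp [hBdef]
    · have hxne : ((x:ℝ)/N) ≠ 0 := div_ne_zero (Int.cast_ne_zero.mpr hx) hN0.ne'
      set a : ℝ := ((x:ℝ)/N)^2 with hadef
      have ha0 : 0 < a := by positivity
      set g : ℝ → ℝ := fun t => Real.exp (-γ*t) * t ^ (-(3:ℝ)/2) * Real.exp (-a/(2*t)) with hgdef
      set I : ℝ := ∫ t in Set.Ioi (0:ℝ), g t with hIdef
      have hstep : (∫ t₁ in Set.Ioi (0:ℝ), ∫ t₂ in Set.Ioi (0:ℝ),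
          Real.exp (-γ * (t₁ + t₂)) * K * t₁ ^ (-(3:ℝ)/2) * t₂ ^ (-(3:ℝ)/2) *
            a * Real.exp (-a / (2*t₁)) * Real.exp (-a / (2*t₂)))
          = K * a * (I * I) := by
        have h1 : ∀ t₁ t₂ : ℝ,
            Real.exp (-γ * (t₁ + t₂)) * K * t₁ ^ (-(3:ℝ)/2) * t₂ ^ (-(3:ℝ)/2) *
              a * Real.exp (-a / (2*t₁)) * Real.exp (-a / (2*t₂))
            = (K * a * g t₁) * g t₂ := by
          intro t₁ t₂
          simp only [hgdef]
          rw [show -γ * (t₁ + t₂) = -γ*t₁ + -γ*t₂ by ring, Real.exp_add]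
          ring
        simp only [h1, MeasureTheory.integral_const_mul]
        rw [← hIdef, MeasureTheory.integral_mul_const, MeasureTheory.integral_const_mul, ← hIdef]
        ring
      rw [hstep, hBdef]
      simp only [if_neg hx]
      -- bound I
      have hg_nonneg : ∀ t ∈ Set.Ioi (0:ℝ), 0 ≤ g t := by
        intro t ht
        exact mul_nonneg (mul_nonneg (Real.exp_pos _).le
          (Real.rpow_nonneg (le_of_lt ht) _)) (Real.exp_pos _).le
      have hInn : 0 ≤ I := setIntegral_nonneg measurableSet_Ioi hg_nonneg
      set E : ℝ := Real.exp (-Real.sqrt (γ*a)) with hEdef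
      set S : ℝ := Real.sqrt (π/(a/4)) with hSdef
      have hIle : I ≤ E * S := by
        have hint : IntegrableOn
            (fun t : ℝ => E * (t ^ (-(3:ℝ)/2) * Real.exp (-(a/4)/t))) (Set.Ioi 0) :=
          (key_integrable (by positivity : (0:ℝ) < a/4)).const_mul E
        calc I ≤ ∫ t in Set.Ioi (0:ℝ), E * (t ^ (-(3:ℝ)/2) * Real.exp (-(a/4)/t)) := by
              refine integral_mono_of_nonneg ?_ hint ?_
              · filter_upwards [self_mem_ae_restrict measurableSet_Ioi] with t ht
                exact hg_nonneg t ht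
              · filter_upwards [self_mem_ae_restrict measurableSet_Ioi] with t ht
                exact pt_bound hγ ha0.le (mem_Ioi.mp ht)
          _ = E * S := by
              rw [MeasureTheory.integral_const_mul, key_integral (by positivity : (0:ℝ) < a/4)]
      have hsa : Real.sqrt (γ*a) = Real.sqrt γ * ((x.natAbs : ℝ)/N) := by
        rw [hadef, Real.sqrt_mul hγ.le, Real.sqrt_sq_eq_abs, abs_div,
          abs_of_pos hN0, Nat.cast_natAbs, Int.cast_abs]
      have hE2 : E * E = q ^ x.natAbs := by
        rw [hEdef, ← Real.exp_add,
          show -Real.sqrt (γ*a) + -Real.sqrt (γ*a) = (x.natAbs : ℝ) * (-b) by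
            rw [hsa, hbdef]; field_simp; ring,
          Real.exp_nat_mul, ← hqdef]
      have hS2 : S * S = π / (a/4) :=
        Real.mul_self_sqrt (by positivity)
      have hE0 : 0 ≤ E := (Real.exp_pos _).le
      have hS0 : 0 ≤ S := Real.sqrt_nonneg _
      calc K * a * (I * I) ≤ K * a * ((E * S) * (E * S)) := by
            refine mul_le_mul_of_nonneg_left ?_ (by positivity)
            exact mul_le_mul hIle hIle hInn (by positivity)
        _ = K * a * ((E * E) * (π / (a/4))) := by
            rw [show (E*S)*(E*S) = (E*E)*(S*S) by ring, hS2]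
        _ = C0 * q ^ x.natAbs := by
            rw [hE2, hC0def]
            field_simp
  -- nonnegativity of the terms
  have hTnn : ∀ x : ℤ, 0 ≤
      (∫ t₁ in Set.Ioi (0:ℝ), ∫ t₂ in Set.Ioi (0:ℝ),
        Real.exp (-γ * (t₁ + t₂)) * K * t₁ ^ (-(3:ℝ)/2) * t₂ ^ (-(3:ℝ)/2) *
          ((x:ℝ)/N)^2 * Real.exp (-((x:ℝ)/N)^2 / (2*t₁)) * Real.exp (-((x:ℝ)/N)^2 / (2*t₂))) := by
    intro x
    refine setIntegral_nonneg measurableSet_Ioi (fun t₁ ht₁ => ?_)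
    refine setIntegral_nonneg measurableSet_Ioi (fun t₂ ht₂ => ?_)
    have h1 : (0:ℝ) ≤ t₁ ^ (-(3:ℝ)/2) := Real.rpow_nonneg (le_of_lt ht₁) _
    have h2 : (0:ℝ) ≤ t₂ ^ (-(3:ℝ)/2) := Real.rpow_nonneg (le_of_lt ht₂) _
    exact mul_nonneg (mul_nonneg (mul_nonneg (mul_nonneg (mul_nonneg (mul_nonneg
      (Real.exp_pos _).le hK0.le) h1) h2) (sq_nonneg _)) (Real.exp_pos _).le)
      (Real.exp_pos _).le
  -- summability of B
  have hs1 : Summable (fun k : ℕ => C0 * q ^ k) :=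
    (summable_geometric_of_lt_one hq0.le hq1).mul_left C0
  have hBpos_nat : Summable (fun k : ℕ => B (k : ℤ)) := by
    refine Summable.of_nonneg_of_le (fun k => ?_) (fun k => ?_) hs1
    · simp only [hBdef]; split <;> positivity
    · simp only [hBdef]
      split
      · positivity
      · simp [Int.natAbs_natCast]
  have hBneg_nat : Summable (fun k : ℕ => B (-((k:ℤ) + 1))) := by
    refine Summable.of_nonneg_of_le (fun k => ?_) (fun k => ?_) hs1
    · simp only [hBdef]; split <;> positivity
    · simp only [hBdef]
      split
      · positivity
      · have h : (-((k:ℤ) + 1)).natAbs = k + 1 := by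
          rw [show -((k:ℤ)+1) = -(((k+1:ℕ)):ℤ) by push_cast; ring, Int.natAbs_neg,
            Int.natAbs_natCast]
        rw [h]
        have : q ^ (k+1) ≤ q ^ k := pow_le_pow_of_le_one hq0.le hq1.le (by omega)
        nlinarith
  have hBsum : Summable B := Summable.of_nat_of_neg_add_one hBpos_nat hBneg_nat
  -- summability of the terms
  have hTsum : Summable (fun x : ℤ =>
      (∫ t₁ in Set.Ioi (0:ℝ), ∫ t₂ in Set.Ioi (0:ℝ),
        Real.exp (-γ * (t₁ + t₂)) * K * t₁ ^ (-(3:ℝ)/2) * t₂ ^ (-(3:ℝ)/2) *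
          ((x:ℝ)/N)^2 * Real.exp (-((x:ℝ)/N)^2 / (2*t₁)) * Real.exp (-((x:ℝ)/N)^2 / (2*t₂)))) :=
    Summable.of_nonneg_of_le hTnn hmain hBsum
  -- value of tsum B
  have htsum_pos : ∑' k : ℕ, B (k : ℤ) = C0 * q * (1-q)⁻¹ := by
    rw [Summable.tsum_eq_zero_add hBpos_nat]
    have h0 : B ((0:ℕ) : ℤ) = 0 := by simp [hBdef]
    have h1 : ∀ k : ℕ, B ((k+1 : ℕ) : ℤ) = (C0 * q) * q ^ k := by
      intro k
      simp only [hBdef]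
      rw [if_neg (by exact_mod_cast Nat.succ_ne_zero k)]
      have : ((k+1:ℕ):ℤ).natAbs = k + 1 := Int.natAbs_natCast _
      rw [this, pow_succ]
      ring
    simp only [h0, h1, zero_add]
    rw [tsum_mul_left, tsum_geometric_of_lt_one hq0.le hq1]
  have htsum_neg : ∑' k : ℕ, B (-((k:ℤ) + 1)) = C0 * q * (1-q)⁻¹ := by
    have h1 : ∀ k : ℕ, B (-((k:ℤ) + 1)) = (C0 * q) * q ^ k := by
      intro k
      simp only [hBdef]
      rw [if_neg (by omega)]
      have h : (-((k:ℤ) + 1)).natAbs = k + 1 := by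
        rw [show -((k:ℤ)+1) = -(((k+1:ℕ)):ℤ) by push_cast; ring, Int.natAbs_neg,
          Int.natAbs_natCast]
      rw [h, pow_succ]
      ring
    simp only [h1]
    rw [tsum_mul_left, tsum_geometric_of_lt_one hq0.le hq1]
  have htsumB : ∑' x : ℤ, B x = 2 * (C0 * (q * (1-q)⁻¹)) := by
    rw [tsum_of_nat_of_neg_add_one hBpos_nat hBneg_nat, htsum_pos, htsum_neg]
    ring
  -- final chain
  calc (∑' x : ℤ, ∫ t₁ in Set.Ioi (0:ℝ), ∫ t₂ in Set.Ioi (0:ℝ),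
        Real.exp (-γ * (t₁ + t₂)) * K * t₁ ^ (-(3:ℝ)/2) * t₂ ^ (-(3:ℝ)/2) *
          ((x:ℝ)/N)^2 * Real.exp (-((x:ℝ)/N)^2 / (2*t₁)) * Real.exp (-((x:ℝ)/N)^2 / (2*t₂)))
      ≤ ∑' x : ℤ, B x := Summable.tsum_le_tsum hmain hTsum hBsum
    _ = 2 * (C0 * (q * (1-q)⁻¹)) := htsumB
    _ ≤ 2 * (C0 * (1/b)) := by
        refine mul_le_mul_of_nonneg_left (mul_le_mul_of_nonneg_left ?_ hC00.le) (by norm_num)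
        rw [hqdef]
        exact geom_bound hb0
    _ = 4 * π * ε^2 / (N * Real.sqrt γ) := by
        rw [hC0def, hbdef, hKdef]
        field_simp
end

section
/- There exists a universal constant C > 0 such that for every integer n ≥ 1 and all reals γ > 0 and ε > 0, ∫₀^∞ ∫₀^∞ e^{−γ(t₁+t₂)} · ∑_{x₁ ≠ x₂ ∈ ℤ} (ε²/n²) · t₁^{−3/2} · t₂^{−3/2} · |x₁/n| · |x₂/n| · exp(−(x₁/n)²/(2t₁)) · exp(−(x₂/n)²/(2t₂)) dt₁ dt₂ ≤ C · ε² / γ. -/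
open MeasureTheory Real Set

private lemma keyA {β : ℝ} (hβ : 0 < β) (T : Finset ℕ) :
    ∑ k ∈ T, (k : ℝ) * Real.exp (-(β * (k : ℝ) ^ 2)) ≤ 1 / β := by
  classical
  set h : ℕ → ℝ := fun k => (k : ℝ) * Real.exp (-(β * (k : ℝ) ^ 2)) with hh
  set G : ℕ → ℝ := fun i => Real.exp (-(β * (i : ℝ) ^ 2)) with hG
  have hnn : ∀ k, 0 ≤ h k := fun k => by positivity
  set N := T.sup id with hN
  have hsub : T ⊆ Finset.range (N + 1) := fun k hk =>
    Finset.mem_range.mpr (Nat.lt_succ_of_le (Finset.le_sup (f := id) hk))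
  have h1 : ∑ k ∈ T, h k ≤ ∑ k ∈ Finset.range (N + 1), h k :=
    Finset.sum_le_sum_of_subset_of_nonneg hsub fun i _ _ => hnn i
  have h2 : ∑ k ∈ Finset.range (N + 1), h k = ∑ i ∈ Finset.range N, h (i + 1) + h 0 :=
    Finset.sum_range_succ' h N
  have h0 : h 0 = 0 := by simp [hh]
  have key : ∀ i : ℕ, h (i + 1) ≤ (1 / β) * (G i - G (i + 1)) := by
    intro i
    have hi : (0 : ℝ) ≤ (i : ℝ) := Nat.cast_nonneg i
    have e1 : G i = G (i + 1) * Real.exp (β * (2 * (i : ℝ) + 1)) := by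
      rw [hG]
      simp only [← Real.exp_add]
      congr 1
      push_cast
      ring
    have e2 : β * (2 * (i : ℝ) + 1) + 1 ≤ Real.exp (β * (2 * (i : ℝ) + 1)) :=
      Real.add_one_le_exp _
    have hp : 0 < G (i + 1) := Real.exp_pos _
    have hL : h (i + 1) = ((i : ℝ) + 1) * G (i + 1) := by
      rw [hh, hG]; push_cast; ring
    rw [hL, e1]
    have h3 : G (i + 1) * (β * (2 * (i : ℝ) + 1) + 1) ≤
        G (i + 1) * Real.exp (β * (2 * (i : ℝ) + 1)) :=
      mul_le_mul_of_nonneg_left e2 hp.le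
    have hβ' : 0 < 1 / β := by positivity
    have h4 : ((i : ℝ) + 1) * G (i + 1) * β ≤
        G (i + 1) * Real.exp (β * (2 * (i : ℝ) + 1)) - G (i + 1) := by
      nlinarith [mul_nonneg (mul_nonneg hβ.le hi) hp.le]
    calc ((i : ℝ) + 1) * G (i + 1)
        = (1 / β) * (((i : ℝ) + 1) * G (i + 1) * β) := by field_simp
      _ ≤ (1 / β) * (G (i + 1) * Real.exp (β * (2 * (i : ℝ) + 1)) - G (i + 1)) :=
          mul_le_mul_of_nonneg_left h4 hβ'.le
  have h3 : ∑ i ∈ Finset.range N, h (i + 1) ≤ (1 / β) * (G 0 - G N) := by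
    calc ∑ i ∈ Finset.range N, h (i + 1)
        ≤ ∑ i ∈ Finset.range N, (1 / β) * (G i - G (i + 1)) :=
          Finset.sum_le_sum fun i _ => key i
      _ = (1 / β) * ∑ i ∈ Finset.range N, (G i - G (i + 1)) := by rw [Finset.mul_sum]
      _ = (1 / β) * (G 0 - G N) := by rw [Finset.sum_range_sub' G N]
  have hG0 : G 0 = 1 := by simp [hG]
  have hGN : 0 ≤ G N := (Real.exp_pos _).le
  have : (1 / β) * (G 0 - G N) ≤ 1 / β := by
    rw [hG0]
    have : (1 : ℝ) - G N ≤ 1 := by linarith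
    calc (1 / β) * (1 - G N) ≤ (1 / β) * 1 := mul_le_mul_of_nonneg_left this (by positivity)
      _ = 1 / β := mul_one _
  linarith [h1, h2.le, h3, h0.le]

private lemma keyB {β : ℝ} (hβ : 0 < β) (u : Finset ℤ) :
    ∑ x ∈ u, |(x : ℝ)| * Real.exp (-(β * (x : ℝ) ^ 2)) ≤ 2 / β := by
  classical
  set f : ℤ → ℝ := fun x => |(x : ℝ)| * Real.exp (-(β * (x : ℝ) ^ 2)) with hf
  have hfn : ∀ x : ℤ, f x = (x.natAbs : ℝ) * Real.exp (-(β * (x.natAbs : ℝ) ^ 2)) := by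
    intro x
    have h1 : ((x.natAbs : ℕ) : ℝ) = |(x : ℝ)| := by
      rw [Nat.cast_natAbs]; exact Int.cast_abs
    have h2 : ((x.natAbs : ℕ) : ℝ) ^ 2 = (x : ℝ) ^ 2 := by rw [h1, sq_abs]
    rw [hf]; simp only [h1, h2]; rw [sq_abs]
  have habs : ∀ (s : Finset ℤ), (∀ x ∈ s, ∀ y ∈ s, x.natAbs = y.natAbs → x = y) →
      ∑ x ∈ s, f x ≤ 1 / β := by
    intro s hinj
    have : ∑ x ∈ s, f x = ∑ k ∈ s.image Int.natAbs, (k : ℝ) * Real.exp (-(β * (k : ℝ) ^ 2)) := by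
      rw [Finset.sum_image hinj]
      exact Finset.sum_congr rfl fun x _ => hfn x
    rw [this]
    exact keyA hβ _
  have hsplit := Finset.sum_filter_add_sum_filter_not u (fun x => 0 ≤ x) f
  have hpos : ∑ x ∈ u.filter (fun x => 0 ≤ x), f x ≤ 1 / β := by
    refine habs _ fun x hx y hy hxy => ?_
    have hx' := (Finset.mem_filter.mp hx).2
    have hy' := (Finset.mem_filter.mp hy).2
    omega
  have hneg : ∑ x ∈ u.filter (fun x => ¬ 0 ≤ x), f x ≤ 1 / β := by
    refine habs _ fun x hx y hy hxy => ?_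
    have hx' := (Finset.mem_filter.mp hx).2
    have hy' := (Finset.mem_filter.mp hy).2
    omega
  have : 1 / β + 1 / β = 2 / β := by ring
  linarith [hsplit.ge, hsplit.le]

private lemma keyC {β : ℝ} (hβ : 0 < β) :
    Summable (fun x : ℤ => |(x : ℝ)| * Real.exp (-(β * (x : ℝ) ^ 2))) ∧
      ∑' x : ℤ, |(x : ℝ)| * Real.exp (-(β * (x : ℝ) ^ 2)) ≤ 2 / β := by
  have hnn : (0 : ℤ → ℝ) ≤ fun x : ℤ => |(x : ℝ)| * Real.exp (-(β * (x : ℝ) ^ 2)) := by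
    intro x; positivity
  have hs := summable_of_sum_le hnn (keyB hβ)
  exact ⟨hs, Summable.tsum_le_of_sum_le hs (keyB hβ)⟩

private lemma keyD {n : ℕ} (hn : 1 ≤ n) {t : ℝ} (ht : 0 < t) :
    Summable (fun x : ℤ => |(x : ℝ) / n| * Real.exp (-((x : ℝ) / n) ^ 2 / (2 * t))) ∧
      ∑' x : ℤ, |(x : ℝ) / n| * Real.exp (-((x : ℝ) / n) ^ 2 / (2 * t)) ≤ 4 * n * t := by
  have hn0 : (0 : ℝ) < n := by exact_mod_cast Nat.pos_of_ne_zero (by omega)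
  set β := 1 / (2 * t * (n : ℝ) ^ 2) with hβdef
  have hβ : 0 < β := by positivity
  have hfun : (fun x : ℤ => |(x : ℝ) / n| * Real.exp (-((x : ℝ) / n) ^ 2 / (2 * t))) =
      fun x : ℤ => (1 / (n : ℝ)) * (|(x : ℝ)| * Real.exp (-(β * (x : ℝ) ^ 2))) := by
    funext x
    have h1 : |(x : ℝ) / n| = |(x : ℝ)| / n := by
      rw [abs_div, abs_of_pos hn0]
    have h2 : -((x : ℝ) / n) ^ 2 / (2 * t) = -(β * (x : ℝ) ^ 2) := by
      rw [hβdef]; field_simp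
    rw [h1, h2]; ring
  obtain ⟨hs, hb⟩ := keyC hβ
  constructor
  · rw [hfun]; exact hs.mul_left _
  · rw [hfun, tsum_mul_left]
    have h2β : 2 / β = 4 * t * (n : ℝ) ^ 2 := by
      rw [hβdef]; field_simp; ring
    calc (1 / (n : ℝ)) * ∑' x : ℤ, |(x : ℝ)| * Real.exp (-(β * (x : ℝ) ^ 2))
        ≤ (1 / (n : ℝ)) * (2 / β) := by
          apply mul_le_mul_of_nonneg_left hb (by positivity)
      _ = 4 * n * t := by rw [h2β]; field_simp

private lemma keyP {n : ℕ} (hn : 1 ≤ n) {γ ε : ℝ} (hγ : 0 < γ) (hε : 0 < ε)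
    {t₁ t₂ : ℝ} (ht₁ : 0 < t₁) (ht₂ : 0 < t₂) :
    Real.exp (-γ * (t₁ + t₂)) *
          ∑' q : ℤ × ℤ, (if q.1 ≠ q.2 then
            (ε^2 / (n:ℝ)^2) * t₁ ^ (-(3:ℝ)/2) * t₂ ^ (-(3:ℝ)/2) *
              |(q.1:ℝ)/n| * |(q.2:ℝ)/n| *
              Real.exp (-((q.1:ℝ)/n)^2 / (2*t₁)) * Real.exp (-((q.2:ℝ)/n)^2 / (2*t₂))
          else 0)
      ≤ 16 * ε ^ 2 * (t₁ ^ (-(1:ℝ)/2) * Real.exp (-(γ * t₁))) *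
          (t₂ ^ (-(1:ℝ)/2) * Real.exp (-(γ * t₂))) := by
  have hn0 : (0 : ℝ) < n := by exact_mod_cast Nat.pos_of_ne_zero (by omega)
  set a₁ : ℤ → ℝ := fun x => |(x : ℝ) / n| * Real.exp (-((x : ℝ) / n) ^ 2 / (2 * t₁)) with ha₁
  set a₂ : ℤ → ℝ := fun x => |(x : ℝ) / n| * Real.exp (-((x : ℝ) / n) ^ 2 / (2 * t₂)) with ha₂
  obtain ⟨hs₁, hb₁⟩ := keyD hn ht₁
  obtain ⟨hs₂, hb₂⟩ := keyD hn ht₂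
  have hnn₁ : 0 ≤ a₁ := fun x => by rw [ha₁]; positivity
  have hnn₂ : 0 ≤ a₂ := fun x => by rw [ha₂]; positivity
  set c : ℝ := ε ^ 2 / (n : ℝ) ^ 2 * t₁ ^ (-(3:ℝ)/2) * t₂ ^ (-(3:ℝ)/2) with hc
  have hc0 : 0 ≤ c := by rw [hc]; positivity
  have hpair : Summable (fun q : ℤ × ℤ => a₁ q.1 * a₂ q.2) :=
    hs₁.mul_of_nonneg hs₂ hnn₁ hnn₂
  have hcs : Summable (fun q : ℤ × ℤ => c * (a₁ q.1 * a₂ q.2)) := hpair.mul_left c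
  have hle : ∀ q : ℤ × ℤ, (if q.1 ≠ q.2 then
      (ε^2 / (n:ℝ)^2) * t₁ ^ (-(3:ℝ)/2) * t₂ ^ (-(3:ℝ)/2) *
        |(q.1:ℝ)/n| * |(q.2:ℝ)/n| *
        Real.exp (-((q.1:ℝ)/n)^2 / (2*t₁)) * Real.exp (-((q.2:ℝ)/n)^2 / (2*t₂))
      else 0) ≤ c * (a₁ q.1 * a₂ q.2) := by
    intro q
    split
    · exact le_of_eq (by rw [hc, ha₁, ha₂]; ring)
    · exact mul_nonneg hc0 (mul_nonneg (hnn₁ _) (hnn₂ _))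
  have hnnq : ∀ q : ℤ × ℤ, 0 ≤ (if q.1 ≠ q.2 then
      (ε^2 / (n:ℝ)^2) * t₁ ^ (-(3:ℝ)/2) * t₂ ^ (-(3:ℝ)/2) *
        |(q.1:ℝ)/n| * |(q.2:ℝ)/n| *
        Real.exp (-((q.1:ℝ)/n)^2 / (2*t₁)) * Real.exp (-((q.2:ℝ)/n)^2 / (2*t₂))
      else 0) := by
    intro q
    split
    · positivity
    · exact le_rfl
  have hsum_le : (∑' q : ℤ × ℤ, (if q.1 ≠ q.2 then
      (ε^2 / (n:ℝ)^2) * t₁ ^ (-(3:ℝ)/2) * t₂ ^ (-(3:ℝ)/2) *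
        |(q.1:ℝ)/n| * |(q.2:ℝ)/n| *
        Real.exp (-((q.1:ℝ)/n)^2 / (2*t₁)) * Real.exp (-((q.2:ℝ)/n)^2 / (2*t₂))
      else 0)) ≤ c * ((∑' x : ℤ, a₁ x) * (∑' x : ℤ, a₂ x)) := by
    have h1 := Summable.tsum_le_tsum hle (Summable.of_nonneg_of_le hnnq hle hcs) hcs
    rw [tsum_mul_left] at h1
    rwa [Summable.tsum_mul_tsum hs₁ hs₂ hpair]
  have hS : c * ((∑' x : ℤ, a₁ x) * (∑' x : ℤ, a₂ x)) ≤ c * ((4 * n * t₁) * (4 * n * t₂)) := by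
    apply mul_le_mul_of_nonneg_left _ hc0
    have hA1 : 0 ≤ ∑' x : ℤ, a₁ x := tsum_nonneg hnn₁
    have hA2 : 0 ≤ ∑' x : ℤ, a₂ x := tsum_nonneg hnn₂
    have h4 : (0:ℝ) ≤ 4 * n * t₁ := by positivity
    exact mul_le_mul hb₁ hb₂ hA2 h4
  have hexp : Real.exp (-γ * (t₁ + t₂)) = Real.exp (-(γ * t₁)) * Real.exp (-(γ * t₂)) := by
    rw [← Real.exp_add]; ring_nf
  have hr : ∀ t : ℝ, 0 < t → t ^ (-(3:ℝ)/2) * t = t ^ (-(1:ℝ)/2) := fun t ht => by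
    rw [show (-(1:ℝ)/2) = -(3:ℝ)/2 + 1 by norm_num, Real.rpow_add ht, Real.rpow_one]
  have hn' : (n:ℝ) ≠ 0 := ne_of_gt hn0
  calc Real.exp (-γ * (t₁ + t₂)) *
          ∑' q : ℤ × ℤ, (if q.1 ≠ q.2 then
            (ε^2 / (n:ℝ)^2) * t₁ ^ (-(3:ℝ)/2) * t₂ ^ (-(3:ℝ)/2) *
              |(q.1:ℝ)/n| * |(q.2:ℝ)/n| *
              Real.exp (-((q.1:ℝ)/n)^2 / (2*t₁)) * Real.exp (-((q.2:ℝ)/n)^2 / (2*t₂))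
          else 0)
      ≤ Real.exp (-γ * (t₁ + t₂)) * (c * ((4 * n * t₁) * (4 * n * t₂))) :=
        mul_le_mul_of_nonneg_left (hsum_le.trans hS) (Real.exp_pos _).le
    _ = 16 * ε ^ 2 * (t₁ ^ (-(3:ℝ)/2) * t₁ * Real.exp (-(γ * t₁))) *
          (t₂ ^ (-(3:ℝ)/2) * t₂ * Real.exp (-(γ * t₂))) := by
        rw [hexp, hc]; field_simp; ring
    _ = 16 * ε ^ 2 * (t₁ ^ (-(1:ℝ)/2) * Real.exp (-(γ * t₁))) *
          (t₂ ^ (-(1:ℝ)/2) * Real.exp (-(γ * t₂))) := by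
        rw [hr t₁ ht₁, hr t₂ ht₂]

/-- Off-diagonal estimate: the double time integral of the off-diagonal sum is bounded by
`C ε² / γ`. -/
theorem stmt6 : ∃ C > (0:ℝ), ∀ n : ℕ, 1 ≤ n → ∀ γ > (0:ℝ), ∀ ε > (0:ℝ),
    ∫ t₁ in Set.Ioi (0:ℝ), ∫ t₂ in Set.Ioi (0:ℝ),
        Real.exp (-γ * (t₁ + t₂)) *
          ∑' q : ℤ × ℤ, (if q.1 ≠ q.2 then
            (ε^2 / (n:ℝ)^2) * t₁ ^ (-(3:ℝ)/2) * t₂ ^ (-(3:ℝ)/2) *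
              |(q.1:ℝ)/n| * |(q.2:ℝ)/n| *
              Real.exp (-((q.1:ℝ)/n)^2 / (2*t₁)) * Real.exp (-((q.2:ℝ)/n)^2 / (2*t₂))
          else 0)
      ≤ C * ε^2 / γ := by
  refine ⟨16 * Real.pi, by positivity, ?_⟩
  intro n hn γ hγ ε hε
  set F : ℝ → ℝ → ℝ := fun t₁ t₂ => Real.exp (-γ * (t₁ + t₂)) *
          ∑' q : ℤ × ℤ, (if q.1 ≠ q.2 then
            (ε^2 / (n:ℝ)^2) * t₁ ^ (-(3:ℝ)/2) * t₂ ^ (-(3:ℝ)/2) *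
              |(q.1:ℝ)/n| * |(q.2:ℝ)/n| *
              Real.exp (-((q.1:ℝ)/n)^2 / (2*t₁)) * Real.exp (-((q.2:ℝ)/n)^2 / (2*t₂))
          else 0) with hFdef
  show (∫ t₁ in Set.Ioi (0:ℝ), ∫ t₂ in Set.Ioi (0:ℝ), F t₁ t₂) ≤ 16 * Real.pi * ε^2 / γ
  set g : ℝ → ℝ := fun t => t ^ (-(1:ℝ)/2) * Real.exp (-(γ * t)) with hgdef
  have hgInt : IntegrableOn g (Set.Ioi (0:ℝ)) := by
    have h := integrableOn_rpow_mul_exp_neg_mul_rpow (p := 1) (s := -(1:ℝ)/2)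
      (by norm_num) zero_lt_one hγ
    simpa [hgdef, Real.rpow_one, neg_mul] using h
  have hJ : ∫ t in Set.Ioi (0:ℝ), g t = (1/γ) ^ ((1:ℝ)/2) * Real.sqrt Real.pi := by
    have h := integral_rpow_mul_exp_neg_mul_Ioi (a := (1:ℝ)/2) (by norm_num) hγ
    rw [Real.Gamma_one_half_eq] at h
    rw [hgdef]
    simp only [show (-(1:ℝ)/2) = (1:ℝ)/2 - 1 by norm_num]
    exact h
  set J : ℝ := (1/γ) ^ ((1:ℝ)/2) * Real.sqrt Real.pi with hJdef
  have hFnn : ∀ t₁ t₂ : ℝ, 0 ≤ t₁ → 0 ≤ t₂ → 0 ≤ F t₁ t₂ := by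
    intro t₁ t₂ h1 h2
    rw [hFdef]
    refine mul_nonneg (Real.exp_nonneg _) (tsum_nonneg fun q => ?_)
    split
    · exact mul_nonneg (mul_nonneg (mul_nonneg (mul_nonneg (mul_nonneg (mul_nonneg
        (by positivity) (Real.rpow_nonneg h1 _)) (Real.rpow_nonneg h2 _)) (abs_nonneg _))
        (abs_nonneg _)) (Real.exp_nonneg _)) (Real.exp_nonneg _)
    · exact le_rfl
  have hinner : ∀ t₁ : ℝ, 0 < t₁ →
      (∫ t₂ in Set.Ioi (0:ℝ), F t₁ t₂) ≤ (16 * ε^2 * J) * g t₁ := by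
    intro t₁ ht₁
    have h1 : (∫ t₂ in Set.Ioi (0:ℝ), F t₁ t₂)
        ≤ ∫ t₂ in Set.Ioi (0:ℝ), (16 * ε^2 * g t₁) * g t₂ := by
      refine integral_mono_of_nonneg ?_ (hgInt.const_mul _) ?_
      · filter_upwards [self_mem_ae_restrict measurableSet_Ioi] with t₂ ht₂
        exact hFnn t₁ t₂ ht₁.le (le_of_lt ht₂)
      · filter_upwards [self_mem_ae_restrict measurableSet_Ioi] with t₂ ht₂
        have hP := keyP hn hγ hε ht₁ (show (0:ℝ) < t₂ from ht₂)
        calc F t₁ t₂ ≤ 16 * ε ^ 2 * (t₁ ^ (-(1:ℝ)/2) * Real.exp (-(γ * t₁))) *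
              (t₂ ^ (-(1:ℝ)/2) * Real.exp (-(γ * t₂))) := by rw [hFdef]; exact hP
          _ = (16 * ε^2 * g t₁) * g t₂ := by rw [hgdef]
    rw [MeasureTheory.integral_const_mul, hJ] at h1
    calc (∫ t₂ in Set.Ioi (0:ℝ), F t₁ t₂) ≤ 16 * ε^2 * g t₁ * J := h1
      _ = (16 * ε^2 * J) * g t₁ := by ring
  have houter : (∫ t₁ in Set.Ioi (0:ℝ), ∫ t₂ in Set.Ioi (0:ℝ), F t₁ t₂)
      ≤ ∫ t₁ in Set.Ioi (0:ℝ), (16 * ε^2 * J) * g t₁ := by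
    refine integral_mono_of_nonneg ?_ (hgInt.const_mul _) ?_
    · filter_upwards [self_mem_ae_restrict measurableSet_Ioi] with t₁ ht₁
      exact setIntegral_nonneg measurableSet_Ioi fun t₂ ht₂ =>
        hFnn t₁ t₂ (le_of_lt ht₁) (le_of_lt ht₂)
    · filter_upwards [self_mem_ae_restrict measurableSet_Ioi] with t₁ ht₁
      exact hinner t₁ ht₁
  rw [MeasureTheory.integral_const_mul, hJ] at houter
  have hJJ : J * J = Real.pi / γ := by
    rw [hJdef]
    have h1 : Real.sqrt Real.pi * Real.sqrt Real.pi = Real.pi :=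
      Real.mul_self_sqrt Real.pi_pos.le
    have h2 : ((1/γ) ^ ((1:ℝ)/2)) * ((1/γ) ^ ((1:ℝ)/2)) = 1/γ := by
      rw [← Real.rpow_add (by positivity)]
      norm_num
    calc ((1/γ) ^ ((1:ℝ)/2) * Real.sqrt Real.pi) * ((1/γ) ^ ((1:ℝ)/2) * Real.sqrt Real.pi)
        = (((1/γ) ^ ((1:ℝ)/2)) * ((1/γ) ^ ((1:ℝ)/2))) * (Real.sqrt Real.pi * Real.sqrt Real.pi) := by
          ring
      _ = (1/γ) * Real.pi := by rw [h1, h2]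
      _ = Real.pi / γ := by ring
  calc (∫ t₁ in Set.Ioi (0:ℝ), ∫ t₂ in Set.Ioi (0:ℝ), F t₁ t₂) ≤ 16 * ε^2 * J * J := houter
    _ = 16 * ε^2 * (J * J) := by ring
    _ = 16 * Real.pi * ε^2 / γ := by rw [hJJ]; ring
end

section
/- Let α be a type, k ∈ ℕ, and x : Fin k → α a list of k points. Call an index i non-repetitive if x j ≠ x i for every j ≠ i, and let ℓ be the number of non-repetitive indices. Let I be a finite set of indices such that x is injective on I and such that for every non-repetitive index i there exists i' ∈ I with x i' = x i. Then ℓ ≤ |I| and 2·|I| ≤ k + ℓ. -/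
/-- If `I` indexes a duplicate-free sublist of the list `x : Fin k → α` containing all
non-repetitive values, and `ℓ` is the number of non-repetitive indices, then
`ℓ ≤ |I|` and `2|I| ≤ k + ℓ`. -/
theorem stmt9 {α : Type*} [DecidableEq α] (k : ℕ) (x : Fin k → α)
    (I : Finset (Fin k)) (hinj : Set.InjOn x ↑I)
    (hcov : ∀ i : Fin k, (∀ j : Fin k, j ≠ i → x j ≠ x i) → ∃ i' ∈ I, x i' = x i) :
    (Finset.univ.filter (fun i : Fin k => ∀ j : Fin k, j ≠ i → x j ≠ x i)).card ≤ I.card ∧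
    2 * I.card ≤ k +
      (Finset.univ.filter (fun i : Fin k => ∀ j : Fin k, j ≠ i → x j ≠ x i)).card := by
  set N := Finset.univ.filter (fun i : Fin k => ∀ j : Fin k, j ≠ i → x j ≠ x i) with hN
  -- every non-repetitive index is in I
  have hsub : N ⊆ I := by
    intro i hi
    rw [hN, Finset.mem_filter] at hi
    obtain ⟨i', hi'I, hi'x⟩ := hcov i hi.2
    rcases eq_or_ne i' i with rfl | hne
    · exact hi'I
    · exact absurd hi'x (hi.2 i' hne)
  refine ⟨Finset.card_le_card hsub, ?_⟩
  -- each i ∈ I \ N has a partner outside I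
  classical
  have hrep : ∀ i ∈ I \ N, ∃ j, j ≠ i ∧ x j = x i := by
    intro i hi
    rw [Finset.mem_sdiff, hN, Finset.mem_filter] at hi
    have := hi.2
    push_neg at this
    obtain ⟨j, hj1, hj2⟩ := this (Finset.mem_univ i)
    exact ⟨j, hj1, hj2⟩
  set f : Fin k → Fin k := fun i =>
    if h : ∃ j, j ≠ i ∧ x j = x i then h.choose else i with hf
  have hcard : (I \ N).card ≤ (Finset.univ \ I).card := by
    apply Finset.card_le_card_of_injOn f
    · intro i hi
      have h := hrep i hi
      have hfi : f i = h.choose := dif_pos h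
      have hspec := h.choose_spec
      rw [Finset.mem_coe, Finset.mem_sdiff]
      refine ⟨Finset.mem_univ _, fun hmem => ?_⟩
      have hiI : i ∈ I := (Finset.mem_sdiff.mp hi).1
      exact hspec.1 (hinj (by rw [hfi] at hmem; exact hmem) hiI hspec.2)
    · intro i₁ h₁ i₂ h₂ heq
      have hr₁ := hrep i₁ h₁
      have hr₂ := hrep i₂ h₂
      have e₁ : x (f i₁) = x i₁ := by rw [hf]; simp only [dif_pos hr₁]; exact hr₁.choose_spec.2
      have e₂ : x (f i₂) = x i₂ := by rw [hf]; simp only [dif_pos hr₂]; exact hr₂.choose_spec.2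
      have : x i₁ = x i₂ := by rw [← e₁, ← e₂, heq]
      exact hinj (Finset.mem_sdiff.mp h₁).1 (Finset.mem_sdiff.mp h₂).1 this
  have h1 : (I \ N).card + (I ∩ N).card = I.card := Finset.card_sdiff_add_card_inter I N
  have h2 : (I ∩ N).card ≤ N.card := Finset.card_le_card (Finset.inter_subset_right)
  have h3 : (Finset.univ \ I).card = k - I.card := by
    rw [Finset.card_sdiff_of_subset (Finset.subset_univ I)]
    simp
  have h4 : I.card ≤ k := by
    simpa using Finset.card_le_card (Finset.subset_univ I)
  omega
end

section
/- For every T > 0 there exists a constant C = C(T) > 0 such that for every integer n ≥ 1 and all reals 0 ≤ s < r ≤ t ≤ T, ∫_s^r (n²(r−τ)+1)^{−1/4} · (n²(τ−s)+1)^{−1/4} · (n²(t−τ)+1)^{−1/2} dτ ≤ C · n^{−3/2} · (n²(r−s)+1)^{−1/4}. -/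
open intervalIntegral Real

lemma aux_int (k : ℝ) (hk : 0 < k) (p : ℝ) (hp : p + 1 ≠ 0) (a b : ℝ) (hab : a ≤ b) :
    ∫ τ in a..b, (k * (τ - a) + 1) ^ p
      = ((k * (b - a) + 1) ^ (p + 1) - 1) / ((p + 1) * k) := by
  have hg : ∀ τ ∈ Set.uIcc a b, (0:ℝ) < k * (τ - a) + 1 := by
    intro τ hτ
    rw [Set.uIcc_of_le hab] at hτ
    nlinarith [hτ.1]
  have hd : ∀ τ ∈ Set.uIcc a b,
      HasDerivAt (fun x => (k * (x - a) + 1) ^ (p + 1) / ((p + 1) * k))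
        ((k * (τ - a) + 1) ^ p) τ := by
    intro τ hτ
    have hg' : HasDerivAt (fun x => k * (x - a) + 1) k τ := by
      simpa using (((hasDerivAt_id τ).sub_const a).const_mul k).add_const 1
    have h1 := (Real.hasDerivAt_rpow_const (p := p + 1)
      (Or.inl (ne_of_gt (hg τ hτ)))).comp τ hg'
    have h2 := h1.div_const ((p + 1) * k)
    refine h2.congr_deriv ?_
    rw [show p + 1 - 1 = p by ring]
    field_simp
  have hint : IntervalIntegrable (fun τ => (k * (τ - a) + 1) ^ p) MeasureTheory.volume a b := by
    apply ContinuousOn.intervalIntegrable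
    apply ContinuousOn.rpow_const
    · fun_prop
    · intro x hx; exact Or.inl (ne_of_gt (hg x hx))
  rw [intervalIntegral.integral_eq_sub_of_hasDerivAt hd hint]
  rw [sub_self, mul_zero, zero_add, Real.one_rpow]
  ring

lemma aux_int' (k : ℝ) (hk : 0 < k) (p : ℝ) (hp : p + 1 ≠ 0) (a b : ℝ) (hab : a ≤ b) :
    ∫ τ in a..b, (k * (b - τ) + 1) ^ p
      = ((k * (b - a) + 1) ^ (p + 1) - 1) / ((p + 1) * k) := by
  have h := intervalIntegral.integral_comp_sub_left (a := a) (b := b)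
    (fun u => (k * (u - 0) + 1) ^ p) b
  simp only [sub_zero, sub_self] at h
  rw [h]
  have h2 := aux_int k hk p hp 0 (b - a) (by linarith)
  simp only [sub_zero] at h2
  rw [h2]

set_option maxHeartbeats 1000000

/-- Convolution-type time integral estimate:
`∫_s^r (n²(r-τ)+1)^{-1/4} (n²(τ-s)+1)^{-1/4} (n²(t-τ)+1)^{-1/2} dτ
≤ C n^{-3/2} (n²(r-s)+1)^{-1/4}` for `0 ≤ s < r ≤ t ≤ T`. -/
theorem stmt11 : ∀ T > (0:ℝ), ∃ C > (0:ℝ), ∀ n : ℕ, 1 ≤ n →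
    ∀ s r t : ℝ, 0 ≤ s → s < r → r ≤ t → t ≤ T →
    (∫ τ in s..r,
        ((n:ℝ)^2 * (r - τ) + 1) ^ (-(1:ℝ)/4) * ((n:ℝ)^2 * (τ - s) + 1) ^ (-(1:ℝ)/4) *
          ((n:ℝ)^2 * (t - τ) + 1) ^ (-(1:ℝ)/2))
      ≤ C * (n:ℝ) ^ (-(3:ℝ)/2) * ((n:ℝ)^2 * (r - s) + 1) ^ (-(1:ℝ)/4) := by
  intro T hT
  refine ⟨6 * (T + 1) ^ ((1:ℝ)/4), by positivity, ?_⟩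
  intro n hn s r t hs hsr hrt htT
  have hn1 : (1:ℝ) ≤ (n:ℝ) := by exact_mod_cast hn
  set N : ℝ := (n:ℝ)^2 with hNdef
  have hN1 : (1:ℝ) ≤ N := by nlinarith
  have hN0 : (0:ℝ) < N := by linarith
  set m : ℝ := (s + r)/2 with hm
  have hsm : s ≤ m := by rw [hm]; linarith
  have hmr : m ≤ r := by rw [hm]; linarith
  set A : ℝ := N * ((r - s)/2) + 1 with hA
  have hA0 : (0:ℝ) < A := by rw [hA]; nlinarith
  set f : ℝ → ℝ := fun τ =>
    (N * (r - τ) + 1) ^ (-(1:ℝ)/4) * (N * (τ - s) + 1) ^ (-(1:ℝ)/4) *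
      (N * (t - τ) + 1) ^ (-(1:ℝ)/2) with hf
  -- continuity / integrability of f on [s,r]
  have hcont : ContinuousOn f (Set.Icc s r) := by
    rw [hf]
    apply ContinuousOn.mul
    apply ContinuousOn.mul
    · exact ContinuousOn.rpow_const (by fun_prop)
        (fun x hx => Or.inl (ne_of_gt (by nlinarith [hx.2])))
    · exact ContinuousOn.rpow_const (by fun_prop)
        (fun x hx => Or.inl (ne_of_gt (by nlinarith [hx.1])))
    · exact ContinuousOn.rpow_const (by fun_prop)
        (fun x hx => Or.inl (ne_of_gt (by nlinarith [hx.2])))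
  have hi1 : IntervalIntegrable f MeasureTheory.volume s m :=
    ContinuousOn.intervalIntegrable_of_Icc hsm (hcont.mono (Set.Icc_subset_Icc le_rfl hmr))
  have hi2 : IntervalIntegrable f MeasureTheory.volume m r :=
    ContinuousOn.intervalIntegrable_of_Icc hmr (hcont.mono (Set.Icc_subset_Icc hsm le_rfl))
  have hg1 : IntervalIntegrable
      (fun τ => A ^ (-(3:ℝ)/4) * (N * (τ - s) + 1) ^ (-(1:ℝ)/4)) MeasureTheory.volume s m := by
    apply ContinuousOn.intervalIntegrable_of_Icc hsm
    exact continuousOn_const.mul (ContinuousOn.rpow_const (by fun_prop)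
      (fun x hx => Or.inl (ne_of_gt (by nlinarith [hx.1]))))
  have hg2 : IntervalIntegrable
      (fun τ => A ^ (-(1:ℝ)/4) * (N * (r - τ) + 1) ^ (-(3:ℝ)/4)) MeasureTheory.volume m r := by
    apply ContinuousOn.intervalIntegrable_of_Icc hmr
    exact continuousOn_const.mul (ContinuousOn.rpow_const (by fun_prop)
      (fun x hx => Or.inl (ne_of_gt (by nlinarith [hx.2]))))
  -- pointwise bound on [s, m]
  have hpt1 : ∀ τ ∈ Set.Icc s m,
      f τ ≤ A ^ (-(3:ℝ)/4) * (N * (τ - s) + 1) ^ (-(1:ℝ)/4) := by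
    intro τ hτ
    have hτ1 : s ≤ τ := hτ.1
    have hτ2 : τ ≤ (s + r)/2 := hm ▸ hτ.2
    have hb2 : (0:ℝ) ≤ (N * (τ - s) + 1) ^ (-(1:ℝ)/4) :=
      Real.rpow_nonneg (by nlinarith) _
    have h1 : (N * (r - τ) + 1) ^ (-(1:ℝ)/4) ≤ A ^ (-(1:ℝ)/4) :=
      Real.rpow_le_rpow_of_nonpos hA0 (by rw [hA]; nlinarith) (by norm_num)
    have h3 : (N * (t - τ) + 1) ^ (-(1:ℝ)/2) ≤ A ^ (-(1:ℝ)/2) :=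
      Real.rpow_le_rpow_of_nonpos hA0 (by rw [hA]; nlinarith) (by norm_num)
    calc f τ = (N * (r - τ) + 1) ^ (-(1:ℝ)/4) * (N * (τ - s) + 1) ^ (-(1:ℝ)/4) *
          (N * (t - τ) + 1) ^ (-(1:ℝ)/2) := by rw [hf]
      _ ≤ A ^ (-(1:ℝ)/4) * (N * (τ - s) + 1) ^ (-(1:ℝ)/4) * A ^ (-(1:ℝ)/2) := by
          apply mul_le_mul (mul_le_mul h1 le_rfl hb2 (Real.rpow_nonneg hA0.le _)) h3
            (Real.rpow_nonneg (by nlinarith) _) (by positivity)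
      _ = (A ^ (-(1:ℝ)/4) * A ^ (-(1:ℝ)/2)) * (N * (τ - s) + 1) ^ (-(1:ℝ)/4) := by ring
      _ = A ^ (-(3:ℝ)/4) * (N * (τ - s) + 1) ^ (-(1:ℝ)/4) := by
          rw [← Real.rpow_add hA0]; norm_num
  -- pointwise bound on [m, r]
  have hpt2 : ∀ τ ∈ Set.Icc m r,
      f τ ≤ A ^ (-(1:ℝ)/4) * (N * (r - τ) + 1) ^ (-(3:ℝ)/4) := by
    intro τ hτ
    have hτ1 : (s + r)/2 ≤ τ := hm ▸ hτ.1
    have hτ2 : τ ≤ r := hτ.2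
    have hbr : (0:ℝ) < N * (r - τ) + 1 := by nlinarith
    have h2 : (N * (τ - s) + 1) ^ (-(1:ℝ)/4) ≤ A ^ (-(1:ℝ)/4) :=
      Real.rpow_le_rpow_of_nonpos hA0 (by rw [hA]; nlinarith) (by norm_num)
    have h3 : (N * (t - τ) + 1) ^ (-(1:ℝ)/2) ≤ (N * (r - τ) + 1) ^ (-(1:ℝ)/2) :=
      Real.rpow_le_rpow_of_nonpos hbr (by nlinarith) (by norm_num)
    calc f τ = (N * (r - τ) + 1) ^ (-(1:ℝ)/4) * (N * (τ - s) + 1) ^ (-(1:ℝ)/4) *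
          (N * (t - τ) + 1) ^ (-(1:ℝ)/2) := by rw [hf]
      _ ≤ (N * (r - τ) + 1) ^ (-(1:ℝ)/4) * A ^ (-(1:ℝ)/4) *
          (N * (r - τ) + 1) ^ (-(1:ℝ)/2) := by
          apply mul_le_mul (mul_le_mul le_rfl h2 (Real.rpow_nonneg (by nlinarith) _)
            (Real.rpow_nonneg hbr.le _)) h3 (Real.rpow_nonneg (by nlinarith) _) (by positivity)
      _ = A ^ (-(1:ℝ)/4) * ((N * (r - τ) + 1) ^ (-(1:ℝ)/4) * (N * (r - τ) + 1) ^ (-(1:ℝ)/2)) := by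
          ring
      _ = A ^ (-(1:ℝ)/4) * (N * (r - τ) + 1) ^ (-(3:ℝ)/4) := by
          rw [← Real.rpow_add hbr]; norm_num
  -- left piece
  have hmsA : N * (m - s) + 1 = A := by rw [hm, hA]; ring
  have hrmA : N * (r - m) + 1 = A := by rw [hm, hA]; ring
  have hApos34 : (0:ℝ) < A ^ ((3:ℝ)/4) := Real.rpow_pos_of_pos hA0 _
  have hApos14 : (0:ℝ) < A ^ ((1:ℝ)/4) := Real.rpow_pos_of_pos hA0 _
  have hleft : (∫ τ in s..m, f τ) ≤ 4 / (3 * N) := by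
    have hmono := intervalIntegral.integral_mono_on hsm hi1 hg1 hpt1
    refine hmono.trans ?_
    rw [intervalIntegral.integral_const_mul,
      aux_int N hN0 (-(1:ℝ)/4) (by norm_num) s m hsm, hmsA,
      show -(1:ℝ)/4 + 1 = (3:ℝ)/4 by norm_num]
    have hc : A ^ (-(3:ℝ)/4) * A ^ ((3:ℝ)/4) = 1 := by
      rw [← Real.rpow_add hA0]; norm_num
    calc A ^ (-(3:ℝ)/4) * ((A ^ ((3:ℝ)/4) - 1) / ((3:ℝ)/4 * N))
        ≤ A ^ (-(3:ℝ)/4) * (A ^ ((3:ℝ)/4) * (4 / (3 * N))) := by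
          apply mul_le_mul_of_nonneg_left ?_ (Real.rpow_nonneg hA0.le _)
          rw [div_le_iff₀ (by positivity)]
          have he : A ^ ((3:ℝ)/4) * (4 / (3 * N)) * ((3:ℝ)/4 * N) = A ^ ((3:ℝ)/4) := by
            field_simp
          linarith
      _ = (A ^ (-(3:ℝ)/4) * A ^ ((3:ℝ)/4)) * (4 / (3 * N)) := by ring
      _ = 4 / (3 * N) := by rw [hc, one_mul]
  -- right piece
  have hright : (∫ τ in m..r, f τ) ≤ 4 / N := by
    have hmono := intervalIntegral.integral_mono_on hmr hi2 hg2 hpt2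
    refine hmono.trans ?_
    rw [intervalIntegral.integral_const_mul,
      aux_int' N hN0 (-(3:ℝ)/4) (by norm_num) m r hmr, hrmA,
      show -(3:ℝ)/4 + 1 = (1:ℝ)/4 by norm_num]
    have hc : A ^ (-(1:ℝ)/4) * A ^ ((1:ℝ)/4) = 1 := by
      rw [← Real.rpow_add hA0]; norm_num
    calc A ^ (-(1:ℝ)/4) * ((A ^ ((1:ℝ)/4) - 1) / ((1:ℝ)/4 * N))
        ≤ A ^ (-(1:ℝ)/4) * (A ^ ((1:ℝ)/4) * (4 / N)) := by
          apply mul_le_mul_of_nonneg_left ?_ (Real.rpow_nonneg hA0.le _)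
          rw [div_le_iff₀ (by positivity)]
          have he : A ^ ((1:ℝ)/4) * (4 / N) * ((1:ℝ)/4 * N) = A ^ ((1:ℝ)/4) := by
            field_simp
          linarith
      _ = (A ^ (-(1:ℝ)/4) * A ^ ((1:ℝ)/4)) * (4 / N) := by ring
      _ = 4 / N := by rw [hc, one_mul]
  have hsplit : (∫ τ in s..r, f τ) = (∫ τ in s..m, f τ) + ∫ τ in m..r, f τ :=
    (intervalIntegral.integral_add_adjacent_intervals hi1 hi2).symm
  have htotal : (∫ τ in s..r, f τ) ≤ 16 / (3 * N) := by
    rw [hsplit]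
    have : 4 / (3 * N) + 4 / N = 16 / (3 * N) := by field_simp; ring
    linarith
  -- final comparison
  have hrsT : r - s ≤ T := by linarith
  have hBle : N * (r - s) + 1 ≤ N * (T + 1) := by nlinarith
  have hB0 : (0:ℝ) < N * (r - s) + 1 := by nlinarith
  have hB : (N * (T + 1)) ^ (-(1:ℝ)/4) ≤ (N * (r - s) + 1) ^ (-(1:ℝ)/4) :=
    Real.rpow_le_rpow_of_nonpos hB0 hBle (by norm_num)
  have e1 : (N * (T + 1)) ^ (-(1:ℝ)/4) = N ^ (-(1:ℝ)/4) * (T + 1) ^ (-(1:ℝ)/4) :=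
    Real.mul_rpow hN0.le (by linarith)
  have e2 : N ^ (-(1:ℝ)/4) = (n:ℝ) ^ (-(1:ℝ)/2) := by
    rw [hNdef, ← Real.rpow_natCast (n:ℝ) 2, ← Real.rpow_mul (Nat.cast_nonneg n)]
    norm_num
  have e3 : (n:ℝ) ^ (-(3:ℝ)/2) * (n:ℝ) ^ (-(1:ℝ)/2) = N⁻¹ := by
    rw [← Real.rpow_add (by linarith : (0:ℝ) < (n:ℝ)),
      show -(3:ℝ)/2 + -(1:ℝ)/2 = -2 by norm_num,
      Real.rpow_neg (Nat.cast_nonneg n),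
      show (2:ℝ) = ((2:ℕ):ℝ) by norm_num, Real.rpow_natCast, hNdef]
  have e4 : (T + 1) ^ ((1:ℝ)/4) * (T + 1) ^ (-(1:ℝ)/4) = 1 := by
    rw [← Real.rpow_add (by linarith)]; norm_num
  have key : 6 * (T + 1) ^ ((1:ℝ)/4) * (n:ℝ) ^ (-(3:ℝ)/2) * (N * (T + 1)) ^ (-(1:ℝ)/4)
      = 6 / N := by
    rw [e1, e2]
    calc 6 * (T + 1) ^ ((1:ℝ)/4) * (n:ℝ) ^ (-(3:ℝ)/2) *
          ((n:ℝ) ^ (-(1:ℝ)/2) * (T + 1) ^ (-(1:ℝ)/4))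
        = 6 * ((T + 1) ^ ((1:ℝ)/4) * (T + 1) ^ (-(1:ℝ)/4)) *
          ((n:ℝ) ^ (-(3:ℝ)/2) * (n:ℝ) ^ (-(1:ℝ)/2)) := by ring
      _ = 6 / N := by rw [e3, e4]; field_simp
  have hfin : (16:ℝ) / (3 * N) ≤
      6 * (T + 1) ^ ((1:ℝ)/4) * (n:ℝ) ^ (-(3:ℝ)/2) * (N * (r - s) + 1) ^ (-(1:ℝ)/4) := by
    calc (16:ℝ) / (3 * N) ≤ 6 / N := by
          rw [div_le_div_iff₀ (by positivity) hN0]; nlinarith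
      _ = 6 * (T + 1) ^ ((1:ℝ)/4) * (n:ℝ) ^ (-(3:ℝ)/2) * (N * (T + 1)) ^ (-(1:ℝ)/4) := key.symm
      _ ≤ 6 * (T + 1) ^ ((1:ℝ)/4) * (n:ℝ) ^ (-(3:ℝ)/2) * (N * (r - s) + 1) ^ (-(1:ℝ)/4) := by
          apply mul_le_mul_of_nonneg_left hB (by positivity)
  exact htotal.trans hfin
end

section
/- Let u₁ ≤ u₂ be real numbers, let s, t > 0, and let χ : ℝ → ℝ be bounded and measurable. Then the limit as K → ∞ of ∫_ℝ ( (T_s G^K_{u₁})(u) − G^K_{u₁}(u) ) · ( (T_t G^K_{u₂})(u) − G^K_{u₂}(u) ) · χ(u) du exists and equals ∫_{−∞}^{u₁} Φ_s(u₁−u) · Φ_t(u₂−u) · χ(u) du − ∫_{u₁}^{u₂} Φ_s(u−u₁) · Φ_t(u₂−u) · χ(u) du + ∫_{u₂}^{∞} Φ_s(u−u₁) · Φ_t(u−u₂) · χ(u) du. -/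
/-- The Gaussian heat kernel `p_t(x,y) = (4πt)^{-1/2} exp(-(x-y)²/(4t))`. -/
noncomputable def hk (t x y : ℝ) : ℝ :=
  (4 * Real.pi * t) ^ (-(1:ℝ)/2) * Real.exp (-(x - y)^2 / (4 * t))

/-- The heat semigroup `(T_t f)(x) = ∫ p_t(x,y) f(y) dy`. -/
noncomputable def heatSg (t : ℝ) (f : ℝ → ℝ) (x : ℝ) : ℝ := ∫ y : ℝ, hk t x y * f y

/-- The triangular approximation `G^K_u` of the Heaviside function centred at `u`. -/
noncomputable def G (K u v : ℝ) : ℝ := if u ≤ v then max 0 (1 - (v - u) / K) else 0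

/-- The normalized indicator `ι^ε_u = ε⁻¹ 1_{[u, u+ε]}`. -/
noncomputable def iot (ε u : ℝ) : ℝ → ℝ := Set.indicator (Set.Icc u (u + ε)) (fun _ => ε⁻¹)

/-- The Gaussian tail function `Φ_t(a) = ∫_a^∞ p_t(0,v) dv`. -/
noncomputable def Phi (t a : ℝ) : ℝ := ∫ v in Set.Ioi a, hk t 0 v


open MeasureTheory Real Set Filter

lemma four_pi_t_pos {t : ℝ} (ht : 0 < t) : 0 < 4 * Real.pi * t := by positivity

lemma hk_eq {t : ℝ} (ht : 0 < t) (x y : ℝ) :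
    hk t x y = (4 * Real.pi * t) ^ (-(1:ℝ)/2) * Real.exp (-(1/(4*t)) * (y - x)^2) := by
  unfold hk
  congr 1
  congr 1
  field_simp
  ring

lemma hk_nonneg {t : ℝ} (ht : 0 < t) (x y : ℝ) : 0 ≤ hk t x y := by
  unfold hk
  have := four_pi_t_pos ht
  positivity

lemma hk_translate (t u z : ℝ) : hk t u (z + u) = hk t 0 z := by
  unfold hk; congr 2; ring

lemma hk_even (t z : ℝ) : hk t 0 (-z) = hk t 0 z := by
  unfold hk; congr 2; ring

lemma hk_shift (t u y : ℝ) : hk t u y = hk t 0 (y - u) := by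
  unfold hk; congr 2; ring

lemma hk_integrable {t : ℝ} (ht : 0 < t) (u : ℝ) : Integrable (fun y => hk t u y) := by
  have h : Integrable (fun y : ℝ => Real.exp (-(1/(4*t)) * y^2)) :=
    integrable_exp_neg_mul_sq (by positivity)
  have h2 := (h.comp_sub_right u).const_mul ((4 * Real.pi * t) ^ (-(1:ℝ)/2))
  refine h2.congr ?_
  filter_upwards with y
  rw [hk_eq ht]

lemma hk_poly_integrable {t : ℝ} (ht : 0 < t) (u : ℝ) :
    Integrable (fun y => hk t u y * (1 + |y - u|)) := by
  have hb : (0:ℝ) < 1/(4*t) := by positivity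
  have h1 : Integrable (fun y : ℝ => Real.exp (-(1/(4*t)) * y^2)) :=
    integrable_exp_neg_mul_sq hb
  have h2 : Integrable (fun y : ℝ => y * Real.exp (-(1/(4*t)) * y^2)) :=
    integrable_mul_exp_neg_mul_sq hb
  have h3 : Integrable (fun y : ℝ => Real.exp (-(1/(4*t)) * y^2) +
      |y * Real.exp (-(1/(4*t)) * y^2)|) := h1.add h2.abs
  have h4 := ((h3.comp_sub_right u).const_mul ((4 * Real.pi * t) ^ (-(1:ℝ)/2)))
  refine h4.congr ?_
  filter_upwards with y
  rw [hk_eq ht]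
  have he : (0:ℝ) ≤ Real.exp (-(1/(4*t)) * (y-u)^2) := (Real.exp_pos _).le
  rw [abs_mul, abs_of_nonneg he]
  ring

lemma integral_hk {t : ℝ} (ht : 0 < t) (u : ℝ) : ∫ y, hk t u y = 1 := by
  have hb : (0:ℝ) < 1/(4*t) := by positivity
  have h : ∫ y : ℝ, Real.exp (-(1/(4*t)) * y^2) = Real.sqrt (Real.pi / (1/(4*t))) :=
    integral_gaussian _
  calc ∫ y, hk t u y = ∫ y, (4 * Real.pi * t) ^ (-(1:ℝ)/2) * Real.exp (-(1/(4*t)) * ((y+u) - u)^2) := by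
        rw [← MeasureTheory.integral_add_right_eq_self
          (fun y => hk t u y) u]
        congr 1; funext y; rw [hk_eq ht]
    _ = (4 * Real.pi * t) ^ (-(1:ℝ)/2) * ∫ y : ℝ, Real.exp (-(1/(4*t)) * y^2) := by
        rw [← integral_const_mul]; congr 1; funext y; ring_nf
    _ = 1 := by
        rw [h]
        have : Real.pi / (1/(4*t)) = 4 * Real.pi * t := by field_simp
        rw [this, Real.sqrt_eq_rpow, ← Real.rpow_add (four_pi_t_pos ht)]
        norm_num

/-- The majorant `J_t(d) = ∫_{Ioi d} p_t(0,z)(1+|z|) dz`. -/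
noncomputable def Jf (t d : ℝ) : ℝ := ∫ z in Set.Ioi d, hk t 0 z * (1 + |z|)

lemma Jf_nonneg {t : ℝ} (ht : 0 < t) (d : ℝ) : 0 ≤ Jf t d := by
  apply integral_nonneg
  intro z
  have := hk_nonneg ht 0 z
  positivity

lemma Jf_anti {t : ℝ} (ht : 0 < t) : Antitone (Jf t) := by
  intro a b hab
  apply setIntegral_mono_set ((hk_poly_integrable ht 0).integrableOn.congr_fun (fun z _ => by simp) measurableSet_Ioi)
  · filter_upwards with z
    have := hk_nonneg ht 0 z
    positivity
  · exact HasSubset.Subset.eventuallyLE (Ioi_subset_Ioi hab)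

lemma Phi_nonneg {t : ℝ} (ht : 0 < t) (a : ℝ) : 0 ≤ Phi t a :=
  integral_nonneg fun z => hk_nonneg ht 0 z

lemma Phi_anti {t : ℝ} (ht : 0 < t) : Antitone (Phi t) := by
  intro a b hab
  apply setIntegral_mono_set (hk_integrable ht 0).integrableOn
  · filter_upwards with z using hk_nonneg ht 0 z
  · exact HasSubset.Subset.eventuallyLE (Ioi_subset_Ioi hab)

lemma Phi_le_one {t : ℝ} (ht : 0 < t) (a : ℝ) : Phi t a ≤ 1 := by
  rw [← integral_hk ht 0]
  exact setIntegral_le_integral (hk_integrable ht 0)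
    (by filter_upwards with z using hk_nonneg ht 0 z)

lemma Phi_reflect {t : ℝ} (ht : 0 < t) (a : ℝ) : Phi t (-a) = 1 - Phi t a := by
  have h1 : Phi t (-a) = ∫ v in Set.Iio a, hk t 0 v := by
    unfold Phi
    have : (∫ v in Set.Ioi (-a), hk t 0 v) = ∫ v in Set.Ioi (-a), hk t 0 (-v) := by
      congr 1; funext v; rw [hk_even]
    rw [this, integral_comp_neg_Ioi, neg_neg, MeasureTheory.integral_Iic_eq_integral_Iio]
  have h2 : (∫ v in Set.Iio a, hk t 0 v) + ∫ v in Set.Ici a, hk t 0 v = 1 := by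
    rw [← integral_hk ht 0]
    rw [← MeasureTheory.integral_add_compl (measurableSet_Iio (a := a)) (hk_integrable ht 0)]
    congr 1
    rw [compl_Iio]
  rw [h1, ← h2, MeasureTheory.integral_Ici_eq_integral_Ioi]
  unfold Phi
  ring

lemma Phi_le_Jf {t : ℝ} (ht : 0 < t) (d : ℝ) : Phi t d ≤ Jf t d := by
  apply setIntegral_mono_on (hk_integrable ht 0).integrableOn
    ((hk_poly_integrable ht 0).integrableOn.congr_fun (fun z _ => by simp) measurableSet_Ioi)
    measurableSet_Ioi
  intro z _
  nlinarith [hk_nonneg ht 0 z, abs_nonneg z]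

lemma hk_continuous (t u : ℝ) : Continuous (hk t u) := by
  unfold hk
  fun_prop

/-- Gaussian-with-polynomial majorant at scale `8t`. -/
noncomputable def gb (t z : ℝ) : ℝ :=
  (4 * Real.pi * t) ^ (-(1:ℝ)/2) * Real.exp (-(1/(8*t)) * z^2) * (1 + |z|)

lemma gb_integrable {t : ℝ} (ht : 0 < t) : Integrable (gb t) := by
  have hb : (0:ℝ) < 1/(8*t) := by positivity
  have h1 : Integrable (fun y : ℝ => Real.exp (-(1/(8*t)) * y^2)) :=
    integrable_exp_neg_mul_sq hb
  have h2 : Integrable (fun y : ℝ => y * Real.exp (-(1/(8*t)) * y^2)) :=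
    integrable_mul_exp_neg_mul_sq hb
  have h3 := (h1.add h2.abs).const_mul ((4 * Real.pi * t) ^ (-(1:ℝ)/2))
  refine h3.congr ?_
  filter_upwards with y
  unfold gb
  have he : (0:ℝ) ≤ Real.exp (-(1/(8*t)) * y^2) := (Real.exp_pos _).le
  simp only [Pi.add_apply, abs_mul, abs_of_nonneg he]
  ring

lemma Jf_le_gauss {t : ℝ} (ht : 0 < t) {d : ℝ} (hd : 0 ≤ d) :
    Jf t d ≤ Real.exp (-(1/(8*t)) * d^2) * ∫ z, gb t z := by
  have hint : Integrable (fun z => Real.exp (-(1/(8*t)) * d^2) * gb t z) :=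
    (gb_integrable ht).const_mul _
  have step1 : Jf t d ≤ ∫ z in Set.Ioi d, Real.exp (-(1/(8*t)) * d^2) * gb t z := by
    apply setIntegral_mono_on
    · exact ((hk_poly_integrable ht 0).congr
        (by filter_upwards with z; simp)).integrableOn
    · exact hint.integrableOn
    · exact measurableSet_Ioi
    · intro z hz
      have hz' : d < z := hz
      have hz2 : d^2 ≤ z^2 := by nlinarith
      rw [hk_eq ht]
      unfold gb
      have hc : (0:ℝ) ≤ (4 * Real.pi * t) ^ (-(1:ℝ)/2) := by positivity
      have : Real.exp (-(1/(4*t)) * (z - 0)^2) ≤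
          Real.exp (-(1/(8*t)) * d^2) * Real.exp (-(1/(8*t)) * z^2) := by
        rw [← Real.exp_add]
        apply Real.exp_le_exp.2
        have h48 : 1/(4*t) = 2*(1/(8*t)) := by field_simp; ring
        have hb : (0:ℝ) < 1/(8*t) := by positivity
        rw [h48]
        nlinarith [mul_le_mul_of_nonneg_left hz2 hb.le]
      have h0 : (0:ℝ) ≤ (4 * Real.pi * t) ^ (-(1:ℝ)/2) * (1 + |z|) := by positivity
      have h' := mul_le_mul_of_nonneg_left this h0
      ring_nf at h' ⊢
      linarith [h']
  have step2 : (∫ z in Set.Ioi d, Real.exp (-(1/(8*t)) * d^2) * gb t z)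
      ≤ ∫ z, Real.exp (-(1/(8*t)) * d^2) * gb t z := by
    apply setIntegral_le_integral hint
    filter_upwards with z
    have : 0 ≤ gb t z := by unfold gb; positivity
    positivity
  calc Jf t d ≤ _ := step1
    _ ≤ _ := step2
    _ = _ := by rw [integral_const_mul]

lemma Jf_abs_integrable {t : ℝ} (ht : 0 < t) (c : ℝ) :
    Integrable (fun u => Jf t |u - c|) := by
  have hb : (0:ℝ) < 1/(8*t) := by positivity
  have hdom : Integrable (fun u : ℝ =>
      (∫ z, gb t z) * Real.exp (-(1/(8*t)) * (u - c)^2)) :=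
    ((integrable_exp_neg_mul_sq hb).comp_sub_right c).const_mul _
  apply Integrable.mono' hdom
  · exact ((Jf_anti ht).measurable.comp
      ((measurable_id.sub_const c).abs)).aestronglyMeasurable
  · filter_upwards with u
    rw [Real.norm_eq_abs, abs_of_nonneg (Jf_nonneg ht _)]
    have h := Jf_le_gauss ht (abs_nonneg (u - c))
    rw [sq_abs] at h
    linarith [h]

lemma hk_mul_integrable {t : ℝ} (ht : 0 < t) (u C : ℝ) {g : ℝ → ℝ} (hg : Continuous g)
    (hbd : ∀ y, |g y| ≤ C * (1 + |y - u|)) :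
    Integrable (fun y => hk t u y * g y) := by
  apply Integrable.mono' ((hk_poly_integrable ht u).const_mul C)
  · exact ((hk_continuous t u).mul hg).aestronglyMeasurable
  · filter_upwards with y
    rw [Real.norm_eq_abs, abs_mul, abs_of_nonneg (hk_nonneg ht u y)]
    calc hk t u y * |g y| ≤ hk t u y * (C * (1 + |y - u|)) :=
          mul_le_mul_of_nonneg_left (hbd y) (hk_nonneg ht u y)
      _ = C * (hk t u y * (1 + |y - u|)) := by ring

lemma integrable_hk_ramp {t : ℝ} (ht : 0 < t) (u a : ℝ) :
    Integrable (fun y => hk t u y * max (y - a) 0) := by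
  apply hk_mul_integrable ht u (1 + |u - a|)
  · exact (continuous_id.sub continuous_const).max continuous_const
  · intro y
    rw [abs_of_nonneg (le_max_right _ _)]
    have h1 : max (y - a) 0 ≤ |y - a| := max_le (le_abs_self _) (abs_nonneg _)
    have h2 : |y - a| ≤ |y - u| + |u - a| := abs_sub_le y u a
    nlinarith [abs_nonneg (y - u), abs_nonneg (u - a)]

/-- `mQ t d = ∫ p_t(0,z) (z-d)⁺ dz`. -/
noncomputable def mQ (t d : ℝ) : ℝ := ∫ z, hk t 0 z * max (z - d) 0

lemma mQ_nonneg {t : ℝ} (ht : 0 < t) (d : ℝ) : 0 ≤ mQ t d :=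
  integral_nonneg fun z => mul_nonneg (hk_nonneg ht 0 z) (le_max_right _ _)

lemma mQ_anti {t : ℝ} (ht : 0 < t) : Antitone (mQ t) := by
  intro a b hab
  apply integral_mono (by simpa using integrable_hk_ramp ht 0 b)
    (by simpa using integrable_hk_ramp ht 0 a)
  intro z
  have : max (z - b) 0 ≤ max (z - a) 0 :=
    max_le_max (by linarith) le_rfl
  exact mul_le_mul_of_nonneg_left this (hk_nonneg ht 0 z)

lemma mQ_le_Jf {t : ℝ} (ht : 0 < t) {d : ℝ} (hd : 0 ≤ d) : mQ t d ≤ Jf t d := by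
  have h1 : mQ t d ≤ ∫ z, Set.indicator (Set.Ioi d) (fun z => hk t 0 z * (1 + |z|)) z := by
    apply integral_mono (by simpa using integrable_hk_ramp ht 0 d)
      ((hk_poly_integrable ht 0).congr (by filter_upwards with z; simp)
        |>.indicator measurableSet_Ioi)
    intro z
    by_cases hz : z ∈ Set.Ioi d
    · rw [Set.indicator_of_mem hz]
      have hz' : d < z := hz
      have : max (z - d) 0 ≤ 1 + |z| := by
        rw [max_eq_left (by linarith : (0:ℝ) ≤ z - d)]
        have : z ≤ |z| := le_abs_self z
        linarith
      exact mul_le_mul_of_nonneg_left this (hk_nonneg ht 0 z)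
    · rw [Set.indicator_of_notMem hz]
      have hz' : z ≤ d := not_lt.1 hz
      simp only []
      rw [max_eq_right (by linarith : z - d ≤ 0), mul_zero]
  rw [integral_indicator measurableSet_Ioi] at h1
  exact h1

lemma integral_hk_mul_id {t : ℝ} (ht : 0 < t) : ∫ z, hk t 0 z * z = 0 := by
  have h : (∫ z, hk t 0 z * z) = ∫ z, hk t 0 (-z) * (-z) := by
    rw [MeasureTheory.integral_neg_eq_self (fun z => hk t 0 z * z)]
  have h2 : (∫ z : ℝ, hk t 0 (-z) * (-z)) = - ∫ z, hk t 0 z * z := by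
    rw [← integral_neg]
    congr 1; funext z; rw [hk_even]; ring
  linarith [h, h2, h.trans h2]

lemma heat_ramp {t : ℝ} (ht : 0 < t) (u a : ℝ) :
    (∫ y, hk t u y * max (y - a) 0) = max (u - a) 0 + mQ t |u - a| := by
  have step1 : (∫ y, hk t u y * max (y - a) 0)
      = ∫ z, hk t 0 z * max (z + (u - a)) 0 := by
    rw [← MeasureTheory.integral_add_right_eq_self (fun y => hk t u y * max (y - a) 0) u]
    congr 1; funext z
    rw [hk_translate]
    congr 2
    ring
  rw [step1]
  set w := u - a with hw
  rcases lt_or_ge w 0 with hneg | hpos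
  · rw [max_eq_right hneg.le, abs_of_neg hneg]
    unfold mQ
    rw [zero_add]
    congr 1; funext z; congr 2; ring
  · rw [max_eq_left hpos, abs_of_nonneg hpos]
    have key : ∀ z : ℝ, max (z + w) 0 = w + z + max (-z - w) 0 := by
      intro z
      rcases le_total 0 (z + w) with h | h
      · rw [max_eq_left h, max_eq_right (by linarith)]
        ring
      · rw [max_eq_right h, max_eq_left (by linarith)]
        ring
    have split : (∫ z, hk t 0 z * max (z + w) 0)
        = (∫ z, w * hk t 0 z) + (∫ z, hk t 0 z * z) + ∫ z, hk t 0 z * max (-z - w) 0 := by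
      rw [← integral_add, ← integral_add]
      · congr 1; funext z; rw [key z]; ring
      · exact ((hk_integrable ht 0).const_mul w).add
          (hk_mul_integrable ht 0 1 continuous_id (fun y => by simp [le_abs_self, abs_nonneg]))
      · apply hk_mul_integrable ht 0 (1 + |w|)
        · exact (continuous_id.neg.sub continuous_const).max continuous_const
        · intro y
          rw [abs_of_nonneg (le_max_right _ _)]
          have h1 : max (-y - w) 0 ≤ |(-y) - w| := max_le (le_abs_self _) (abs_nonneg _)
          have h2 : |(-y) - w| ≤ |y| + |w| := by
            calc |(-y) - w| ≤ |(-y)| + |w| := abs_sub _ _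
              _ = |y| + |w| := by rw [abs_neg]
          simp only [sub_zero]
          nlinarith [abs_nonneg y, abs_nonneg w]
      · exact (hk_integrable ht 0).const_mul w
      · exact hk_mul_integrable ht 0 1 continuous_id (fun y => by simp [le_abs_self, abs_nonneg])
    rw [split, integral_const_mul, integral_hk ht 0, integral_hk_mul_id ht]
    have third : (∫ z, hk t 0 z * max (-z - w) 0) = mQ t w := by
      rw [← MeasureTheory.integral_neg_eq_self (fun z => hk t 0 z * max (-z - w) 0)]
      unfold mQ
      congr 1; funext z
      rw [hk_even]
      congr 2
      ring
    rw [third]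
    ring

lemma heat_step {t : ℝ} (ht : 0 < t) (u a : ℝ) :
    (∫ y, hk t u y * (if a ≤ y then (1:ℝ) else 0)) = Phi t (a - u) := by
  have e1 : (fun y => hk t u y * (if a ≤ y then (1:ℝ) else 0))
      = Set.indicator (Set.Ici a) (hk t u) := by
    funext y
    by_cases h : a ≤ y <;> simp [Set.indicator_apply, Set.mem_Ici, h]
  rw [e1, integral_indicator measurableSet_Ici, MeasureTheory.integral_Ici_eq_integral_Ioi,
    ← integral_indicator measurableSet_Ioi,
    ← MeasureTheory.integral_add_right_eq_self (Set.indicator (Set.Ioi a) (hk t u)) u]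
  have e2 : ∀ z : ℝ, Set.indicator (Set.Ioi a) (hk t u) (z + u)
      = Set.indicator (Set.Ioi (a - u)) (hk t 0) z := by
    intro z
    by_cases h : a - u < z
    · rw [Set.indicator_of_mem (show z + u ∈ Set.Ioi a by simp only [Set.mem_Ioi]; linarith),
        Set.indicator_of_mem (by simpa using h), hk_translate]
    · rw [Set.indicator_of_notMem (show z + u ∉ Set.Ioi a by
        simp only [Set.mem_Ioi]; intro hc; exact h (by linarith)),
        Set.indicator_of_notMem (by simpa using h)]
  simp_rw [e2]
  rw [integral_indicator measurableSet_Ioi]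
  rfl

/-- Heaviside step at `a`. -/
noncomputable def stepF (a u : ℝ) : ℝ := if a ≤ u then 1 else 0

/-- The `K → ∞` limit of `T_t G^K_a - G^K_a`. -/
noncomputable def gL (t a u : ℝ) : ℝ := Phi t (a - u) - stepF a u

/-- The error term. -/
noncomputable def epsF (t K a u : ℝ) : ℝ := (mQ t |u - a| - mQ t |u - a - K|) / K

lemma G_decomp {K : ℝ} (hK : 0 < K) (a v : ℝ) :
    G K a v = stepF a v - (max (v - a) 0 - max (v - a - K) 0) / K := by
  unfold G stepF
  by_cases h : a ≤ v
  · simp only [if_pos h]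
    rcases le_total (v - a) K with h2 | h2
    · have hx : (0:ℝ) ≤ 1 - (v - a) / K := by
        rw [sub_nonneg, div_le_one hK]; linarith
      rw [max_eq_right hx, max_eq_left (by linarith : (0:ℝ) ≤ v - a),
        max_eq_right (by linarith : v - a - K ≤ 0)]
      field_simp
      ring
    · have hx : 1 - (v - a) / K ≤ (0:ℝ) := by
        rw [sub_nonpos, le_div_iff₀ hK]; linarith
      rw [max_eq_left hx, max_eq_left (by linarith : (0:ℝ) ≤ v - a),
        max_eq_left (by linarith : (0:ℝ) ≤ v - a - K)]
      field_simp
      ring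
  · simp only [if_neg h]
    push_neg at h
    rw [max_eq_right (by linarith), max_eq_right (by linarith)]
    simp

lemma heatSg_G_sub {t K : ℝ} (ht : 0 < t) (hK : 0 < K) (a u : ℝ) :
    heatSg t (G K a) u - G K a u = gL t a u - epsF t K a u := by
  have hint_step : Integrable (fun y => hk t u y * stepF a y) := by
    have : (fun y => hk t u y * stepF a y) = Set.indicator (Set.Ici a) (hk t u) := by
      funext y
      by_cases h : a ≤ y <;> simp [stepF, Set.indicator_apply, Set.mem_Ici, h]
    rw [this]
    exact (hk_integrable ht u).indicator measurableSet_Ici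
  have h1 : heatSg t (G K a) u
      = (∫ y, hk t u y * stepF a y)
        - ((∫ y, hk t u y * max (y - a) 0) - ∫ y, hk t u y * max (y - (a + K)) 0) * (1/K) := by
    unfold heatSg
    have e : (fun y => hk t u y * G K a y)
        = fun y => hk t u y * stepF a y
          - (hk t u y * max (y - a) 0 - hk t u y * max (y - (a + K)) 0) * (1/K) := by
      funext y
      rw [G_decomp hK a y, show y - a - K = y - (a + K) by ring]
      field_simp
    have i23 : Integrable (fun y => hk t u y * max (y - a) 0
        - hk t u y * max (y - (a + K)) 0) :=
      (integrable_hk_ramp ht u a).sub (integrable_hk_ramp ht u (a + K))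
    have i23' : Integrable (fun y => (hk t u y * max (y - a) 0
        - hk t u y * max (y - (a + K)) 0) * (1/K)) := i23.mul_const _
    rw [e, integral_sub hint_step i23', integral_mul_const, integral_sub
      (integrable_hk_ramp ht u a) (integrable_hk_ramp ht u (a + K))]
  have h2 : (fun y => hk t u y * stepF a y) = fun y => hk t u y * (if a ≤ y then (1:ℝ) else 0) := by
    funext y; rfl
  rw [h1, h2, heat_step ht, heat_ramp ht, heat_ramp ht, G_decomp hK a u]
  unfold gL epsF stepF
  rw [show u - a - K = u - (a + K) by ring]
  by_cases h : a ≤ u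
  · simp only [if_pos h]; field_simp; ring
  · simp only [if_neg h]; field_simp; ring

lemma stepF_measurable (a : ℝ) : Measurable (stepF a) := by
  have : stepF a = Set.indicator (Set.Ici a) (fun _ => (1:ℝ)) := by
    funext u
    by_cases h : a ≤ u <;> simp [stepF, Set.indicator_apply, Set.mem_Ici, h]
  rw [this]
  exact measurable_const.indicator measurableSet_Ici

lemma gL_measurable {t : ℝ} (ht : 0 < t) (a : ℝ) : Measurable (gL t a) := by
  apply Measurable.sub _ (stepF_measurable a)
  exact (Phi_anti ht).measurable.comp (measurable_const.sub measurable_id)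

lemma epsF_measurable {t : ℝ} (ht : 0 < t) (K a : ℝ) : Measurable (epsF t K a) := by
  apply Measurable.div _ measurable_const
  exact ((mQ_anti ht).measurable.comp ((measurable_id.sub_const a).abs)).sub
    ((mQ_anti ht).measurable.comp (((measurable_id.sub_const a).sub_const K).abs))

lemma gL_abs_le_one {t : ℝ} (ht : 0 < t) (a u : ℝ) : |gL t a u| ≤ 1 := by
  unfold gL stepF
  rw [abs_le]
  by_cases h : a ≤ u
  · rw [if_pos h]
    constructor <;> nlinarith [Phi_nonneg ht (a - u), Phi_le_one ht (a - u)]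
  · rw [if_neg h]
    constructor <;> nlinarith [Phi_nonneg ht (a - u), Phi_le_one ht (a - u)]

lemma gL_abs_le_Jf {t : ℝ} (ht : 0 < t) (a u : ℝ) : |gL t a u| ≤ Jf t |u - a| := by
  unfold gL stepF
  by_cases h : a ≤ u
  · rw [if_pos h]
    have hr : Phi t (a - u) = 1 - Phi t (u - a) := by
      have := Phi_reflect ht (u - a)
      rw [show -(u-a) = a - u by ring] at this
      linarith
    rw [hr, abs_of_nonpos (by nlinarith [Phi_nonneg ht (u - a)])]
    rw [abs_of_nonneg (by linarith)]
    have := Phi_le_Jf ht (u - a)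
    linarith
  · push_neg at h
    rw [if_neg (not_le.2 h), sub_zero, abs_of_nonneg (Phi_nonneg ht _),
      abs_of_nonpos (by linarith)]
    have := Phi_le_Jf ht (a - u)
    rw [show -(u - a) = a - u by ring]
    linarith

lemma epsF_abs_le {t K : ℝ} (ht : 0 < t) (hK : 0 < K) (a u : ℝ) :
    |epsF t K a u| ≤ (Jf t |u - a| + Jf t |u - a - K|) / K := by
  unfold epsF
  rw [abs_div, abs_of_pos hK]
  gcongr
  have m1 := mQ_nonneg ht |u - a|
  have m2 := mQ_nonneg ht |u - a - K|
  have j1 := mQ_le_Jf ht (abs_nonneg (u - a))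
  have j2 := mQ_le_Jf ht (abs_nonneg (u - a - K))
  rw [abs_sub_le_iff]
  constructor <;> linarith

lemma epsF_abs_le' {t K : ℝ} (ht : 0 < t) (hK : 0 < K) (a u : ℝ) :
    |epsF t K a u| ≤ 2 * Jf t 0 / K := by
  refine (epsF_abs_le ht hK a u).trans ?_
  gcongr
  have h1 := Jf_anti ht (abs_nonneg (u - a))
  have h2 := Jf_anti ht (abs_nonneg (u - a - K))
  linarith

/-- Limit of the covariance of two current fields: as `K → ∞`,
`∫ (T_s G^K_{u₁} - G^K_{u₁})(T_t G^K_{u₂} - G^K_{u₂}) χ` converges to the three-term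
expression involving Gaussian tail functions. -/
theorem stmt12 (u₁ u₂ : ℝ) (h12 : u₁ ≤ u₂) (s t : ℝ) (hs : 0 < s) (ht : 0 < t)
    (χ : ℝ → ℝ) (hχm : Measurable χ) (M : ℝ) (hχb : ∀ u, |χ u| ≤ M) :
    Filter.Tendsto (fun K : ℝ =>
        ∫ u : ℝ, (heatSg s (G K u₁) u - G K u₁ u) * (heatSg t (G K u₂) u - G K u₂ u) * χ u)
      Filter.atTop
      (nhds ((∫ u in Set.Iio u₁, Phi s (u₁ - u) * Phi t (u₂ - u) * χ u)
        - (∫ u in u₁..u₂, Phi s (u - u₁) * Phi t (u₂ - u) * χ u)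
        + (∫ u in Set.Ioi u₂, Phi s (u - u₁) * Phi t (u - u₂) * χ u))) := by
  have hM : 0 ≤ M := le_trans (abs_nonneg _) (hχb 0)
  -- integrable majorants
  have J1 : Integrable (fun u => Jf s |u - u₁|) := Jf_abs_integrable hs u₁
  have J2 : Integrable (fun u => Jf t |u - u₂|) := Jf_abs_integrable ht u₂
  have J1K : ∀ K : ℝ, Integrable (fun u => Jf s |u - u₁ - K|) := fun K =>
    (Jf_abs_integrable hs (u₁ + K)).congr (by
      filter_upwards with u; rw [show u - (u₁ + K) = u - u₁ - K by ring])
  have J2K : ∀ K : ℝ, Integrable (fun u => Jf t |u - u₂ - K|) := fun K =>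
    (Jf_abs_integrable ht (u₂ + K)).congr (by
      filter_upwards with u; rw [show u - (u₂ + K) = u - u₂ - K by ring])
  -- integrability of the four pieces
  have iP : Integrable (fun u => gL s u₁ u * gL t u₂ u * χ u) := by
    apply Integrable.mono' (J2.const_mul M)
    · exact (((gL_measurable hs u₁).mul (gL_measurable ht u₂)).mul hχm).aestronglyMeasurable
    · filter_upwards with u
      rw [Real.norm_eq_abs, abs_mul, abs_mul]
      have hJ := Jf_nonneg ht |u - u₂|
      calc |gL s u₁ u| * |gL t u₂ u| * |χ u| ≤ 1 * Jf t |u - u₂| * M := by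
            apply mul_le_mul (mul_le_mul (gL_abs_le_one hs u₁ u) (gL_abs_le_Jf ht u₂ u)
              (abs_nonneg _) zero_le_one) (hχb u) (abs_nonneg _)
            positivity
        _ = M * Jf t |u - u₂| := by ring
  have iA : ∀ K : ℝ, 0 < K → Integrable (fun u => gL s u₁ u * epsF t K u₂ u * χ u) := by
    intro K hK
    apply Integrable.mono' ((((J2.add (J2K K)).div_const K)).const_mul M)
    · exact (((gL_measurable hs u₁).mul (epsF_measurable ht K u₂)).mul hχm).aestronglyMeasurable
    · filter_upwards with u
      rw [Real.norm_eq_abs, abs_mul, abs_mul]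
      have h1 := gL_abs_le_one hs u₁ u
      have h2 := epsF_abs_le ht hK u₂ u
      have h3 := hχb u
      have hnn : 0 ≤ (Jf t |u - u₂| + Jf t |u - u₂ - K|) / K := by
        have := Jf_nonneg ht |u - u₂|
        have := Jf_nonneg ht |u - u₂ - K|
        positivity
      calc |gL s u₁ u| * |epsF t K u₂ u| * |χ u|
          ≤ 1 * ((Jf t |u - u₂| + Jf t |u - u₂ - K|) / K) * M := by
            apply mul_le_mul (mul_le_mul h1 h2 (abs_nonneg _) zero_le_one) h3 (abs_nonneg _)
            positivity
        _ = M * ((Jf t |u - u₂| + Jf t |u - u₂ - K|) / K) := by ring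
  have iB : ∀ K : ℝ, 0 < K → Integrable (fun u => epsF s K u₁ u * gL t u₂ u * χ u) := by
    intro K hK
    apply Integrable.mono' ((((J1.add (J1K K)).div_const K)).const_mul M)
    · exact (((epsF_measurable hs K u₁).mul (gL_measurable ht u₂)).mul hχm).aestronglyMeasurable
    · filter_upwards with u
      rw [Real.norm_eq_abs, abs_mul, abs_mul]
      have h1 := epsF_abs_le hs hK u₁ u
      have h2 := gL_abs_le_one ht u₂ u
      have h3 := hχb u
      have hnn : 0 ≤ (Jf s |u - u₁| + Jf s |u - u₁ - K|) / K := by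
        have := Jf_nonneg hs |u - u₁|
        have := Jf_nonneg hs |u - u₁ - K|
        positivity
      calc |epsF s K u₁ u| * |gL t u₂ u| * |χ u|
          ≤ ((Jf s |u - u₁| + Jf s |u - u₁ - K|) / K) * 1 * M := by
            apply mul_le_mul (mul_le_mul h1 h2 (abs_nonneg _) hnn) h3 (abs_nonneg _)
            positivity
        _ = M * ((Jf s |u - u₁| + Jf s |u - u₁ - K|) / K) := by ring
  have iC : ∀ K : ℝ, 0 < K → Integrable (fun u => epsF s K u₁ u * epsF t K u₂ u * χ u) := by
    intro K hK
    apply Integrable.mono' ((((J1.add (J1K K)).div_const K)).const_mul (M * (2 * Jf t 0 / K)))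
    · exact (((epsF_measurable hs K u₁).mul (epsF_measurable ht K u₂)).mul hχm).aestronglyMeasurable
    · filter_upwards with u
      rw [Real.norm_eq_abs, abs_mul, abs_mul]
      have h1 := epsF_abs_le hs hK u₁ u
      have h2 := epsF_abs_le' ht hK u₂ u
      have h3 := hχb u
      have hnn : 0 ≤ (Jf s |u - u₁| + Jf s |u - u₁ - K|) / K := by
        have := Jf_nonneg hs |u - u₁|
        have := Jf_nonneg hs |u - u₁ - K|
        positivity
      have hnn2 : 0 ≤ 2 * Jf t 0 / K := by
        have := Jf_nonneg ht 0
        positivity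
      calc |epsF s K u₁ u| * |epsF t K u₂ u| * |χ u|
          ≤ ((Jf s |u - u₁| + Jf s |u - u₁ - K|) / K) * (2 * Jf t 0 / K) * M := by
            apply mul_le_mul (mul_le_mul h1 h2 (abs_nonneg _) hnn) h3 (abs_nonneg _)
            positivity
        _ = M * (2 * Jf t 0 / K) * ((Jf s |u - u₁| + Jf s |u - u₁ - K|) / K) := by ring
  -- expansion of the integral for each K > 0
  have hFK : ∀ K : ℝ, 0 < K →
      (∫ u, (heatSg s (G K u₁) u - G K u₁ u) * (heatSg t (G K u₂) u - G K u₂ u) * χ u)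
      = (∫ u, gL s u₁ u * gL t u₂ u * χ u)
        - (∫ u, gL s u₁ u * epsF t K u₂ u * χ u)
        - (∫ u, epsF s K u₁ u * gL t u₂ u * χ u)
        + ∫ u, epsF s K u₁ u * epsF t K u₂ u * χ u := by
    intro K hK
    have e : (fun u => (heatSg s (G K u₁) u - G K u₁ u) * (heatSg t (G K u₂) u - G K u₂ u) * χ u)
        = fun u => gL s u₁ u * gL t u₂ u * χ u - gL s u₁ u * epsF t K u₂ u * χ u
          - epsF s K u₁ u * gL t u₂ u * χ u + epsF s K u₁ u * epsF t K u₂ u * χ u := by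
      funext u
      rw [heatSg_G_sub hs hK u₁ u, heatSg_G_sub ht hK u₂ u]
      ring
    have i1 : Integrable (fun u => gL s u₁ u * gL t u₂ u * χ u
        - gL s u₁ u * epsF t K u₂ u * χ u) := iP.sub (iA K hK)
    have i2 : Integrable (fun u => gL s u₁ u * gL t u₂ u * χ u
        - gL s u₁ u * epsF t K u₂ u * χ u - epsF s K u₁ u * gL t u₂ u * χ u) :=
      i1.sub (iB K hK)
    rw [e, integral_add i2 (iC K hK), integral_sub i1 (iB K hK), integral_sub iP (iA K hK)]
  -- reflection of gL
  have hrefl : ∀ (τ : ℝ), 0 < τ → ∀ (a u : ℝ), a ≤ u → gL τ a u = -(Phi τ (u - a)) := by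
    intro τ hτ a u h
    unfold gL stepF
    rw [if_pos h, show a - u = -(u - a) by ring, Phi_reflect hτ]
    ring
  -- the limit integral splits into the three regions
  have hregion : (∫ u, gL s u₁ u * gL t u₂ u * χ u)
      = (∫ u in Set.Iio u₁, Phi s (u₁ - u) * Phi t (u₂ - u) * χ u)
        - (∫ u in u₁..u₂, Phi s (u - u₁) * Phi t (u₂ - u) * χ u)
        + (∫ u in Set.Ioi u₂, Phi s (u - u₁) * Phi t (u - u₂) * χ u) := by
    have split1 : (∫ u in Set.Iio u₁, gL s u₁ u * gL t u₂ u * χ u)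
        + (∫ u in Set.Ici u₁, gL s u₁ u * gL t u₂ u * χ u)
        = ∫ u, gL s u₁ u * gL t u₂ u * χ u := by
      have h := integral_add_compl (measurableSet_Iio (a := u₁)) iP
      rwa [compl_Iio] at h
    have hdisj : Disjoint (Set.Ico u₁ u₂) (Set.Ici u₂) := by
      rw [Set.disjoint_left]
      rintro x ⟨_, hx⟩ hx2
      exact absurd hx2 (not_le.2 hx)
    have split2 : (∫ u in Set.Ici u₁, gL s u₁ u * gL t u₂ u * χ u)
        = (∫ u in Set.Ico u₁ u₂, gL s u₁ u * gL t u₂ u * χ u)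
          + ∫ u in Set.Ici u₂, gL s u₁ u * gL t u₂ u * χ u := by
      rw [← Set.Ico_union_Ici_eq_Ici h12]
      exact setIntegral_union hdisj measurableSet_Ici iP.integrableOn iP.integrableOn
    have r1 : (∫ u in Set.Iio u₁, gL s u₁ u * gL t u₂ u * χ u)
        = ∫ u in Set.Iio u₁, Phi s (u₁ - u) * Phi t (u₂ - u) * χ u := by
      apply setIntegral_congr_fun measurableSet_Iio
      intro u hu
      have hu1 : ¬ u₁ ≤ u := not_le.2 hu
      have hu2 : ¬ u₂ ≤ u := not_le.2 (lt_of_lt_of_le hu h12)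
      simp only [gL, stepF, if_neg hu1, if_neg hu2, sub_zero]
    have r2 : (∫ u in Set.Ico u₁ u₂, gL s u₁ u * gL t u₂ u * χ u)
        = ∫ u in Set.Ico u₁ u₂, -(Phi s (u - u₁) * Phi t (u₂ - u) * χ u) := by
      apply setIntegral_congr_fun measurableSet_Ico
      rintro u ⟨hu1, hu2⟩
      show gL s u₁ u * gL t u₂ u * χ u = -(Phi s (u - u₁) * Phi t (u₂ - u) * χ u)
      rw [hrefl s hs u₁ u hu1]
      have hu2' : ¬ u₂ ≤ u := not_le.2 hu2
      simp only [gL, stepF, if_neg hu2', sub_zero]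
      ring
    have r3 : (∫ u in Set.Ici u₂, gL s u₁ u * gL t u₂ u * χ u)
        = ∫ u in Set.Ici u₂, Phi s (u - u₁) * Phi t (u - u₂) * χ u := by
      apply setIntegral_congr_fun measurableSet_Ici
      intro u hu
      have hu' : u₂ ≤ u := hu
      show gL s u₁ u * gL t u₂ u * χ u = Phi s (u - u₁) * Phi t (u - u₂) * χ u
      rw [hrefl s hs u₁ u (h12.trans hu'), hrefl t ht u₂ u hu']
      ring
    have mid : (∫ u in Set.Ico u₁ u₂, Phi s (u - u₁) * Phi t (u₂ - u) * χ u)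
        = ∫ u in u₁..u₂, Phi s (u - u₁) * Phi t (u₂ - u) * χ u := by
      rw [intervalIntegral.integral_of_le h12, MeasureTheory.integral_Ioc_eq_integral_Ioo,
        MeasureTheory.integral_Ico_eq_integral_Ioo]
    have r3' : (∫ u in Set.Ici u₂, Phi s (u - u₁) * Phi t (u - u₂) * χ u)
        = ∫ u in Set.Ioi u₂, Phi s (u - u₁) * Phi t (u - u₂) * χ u :=
      MeasureTheory.integral_Ici_eq_integral_Ioi
    rw [← split1, split2, r1, r2, r3, integral_neg, mid, r3']
    ring
  -- translation invariance of the majorant integrals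
  have transJ : ∀ (τ : ℝ), ∀ (c : ℝ), (∫ u, Jf τ |u - c|) = ∫ u, Jf τ |u| := by
    intro τ c
    rw [← MeasureTheory.integral_sub_right_eq_self (fun u => Jf τ |u|) c]
  have hCSnn : 0 ≤ ∫ u : ℝ, Jf s |u| := integral_nonneg fun u => Jf_nonneg hs _
  have hCTnn : 0 ≤ ∫ u : ℝ, Jf t |u| := integral_nonneg fun u => Jf_nonneg ht _
  have tendsto_cdiv : ∀ c : ℝ, Tendsto (fun K : ℝ => c / K) atTop (nhds 0) := by
    intro c
    simpa [div_eq_mul_inv] using tendsto_inv_atTop_zero.const_mul c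
  -- the A-integral of the second majorant
  have intA : ∀ K : ℝ, 0 < K → (∫ u, M * ((Jf t |u - u₂| + Jf t |u - u₂ - K|) / K))
      = M * (2 * (∫ u : ℝ, Jf t |u|)) / K := by
    intro K hK
    rw [integral_const_mul]
    have h0 : (∫ u, (Jf t |u - u₂| + Jf t |u - u₂ - K|) / K)
        = (∫ u, Jf t |u - u₂| + Jf t |u - u₂ - K|) / K := by
      rw [integral_div]
    have h2 : (∫ u, Jf t |u - u₂ - K|) = ∫ u : ℝ, Jf t |u| := by
      rw [← transJ t (u₂ + K)]
      congr 1; funext u; rw [show u - (u₂ + K) = u - u₂ - K by ring]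
    rw [h0, integral_add J2 (J2K K), transJ t u₂, h2]
    ring
  have intB : ∀ K : ℝ, 0 < K → (∫ u, M * ((Jf s |u - u₁| + Jf s |u - u₁ - K|) / K))
      = M * (2 * (∫ u : ℝ, Jf s |u|)) / K := by
    intro K hK
    rw [integral_const_mul]
    have h0 : (∫ u, (Jf s |u - u₁| + Jf s |u - u₁ - K|) / K)
        = (∫ u, Jf s |u - u₁| + Jf s |u - u₁ - K|) / K := by
      rw [integral_div]
    have h2 : (∫ u, Jf s |u - u₁ - K|) = ∫ u : ℝ, Jf s |u| := by
      rw [← transJ s (u₁ + K)]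
      congr 1; funext u; rw [show u - (u₁ + K) = u - u₁ - K by ring]
    rw [h0, integral_add J1 (J1K K), transJ s u₁, h2]
    ring
  -- limits of error terms
  have hA : Tendsto (fun K : ℝ => ∫ u, gL s u₁ u * epsF t K u₂ u * χ u) atTop (nhds 0) := by
    apply squeeze_zero_norm' ?_ (tendsto_cdiv (M * (2 * (∫ u : ℝ, Jf t |u|))))
    filter_upwards [eventually_gt_atTop (0:ℝ)] with K hK
    rw [← intA K hK]
    apply norm_integral_le_of_norm_le ((((J2.add (J2K K)).div_const K)).const_mul M)
    filter_upwards with u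
    rw [Real.norm_eq_abs, abs_mul, abs_mul]
    have h1 := gL_abs_le_one hs u₁ u
    have h2 := epsF_abs_le ht hK u₂ u
    have h3 := hχb u
    have hnn : 0 ≤ (Jf t |u - u₂| + Jf t |u - u₂ - K|) / K := by
      have := Jf_nonneg ht |u - u₂|
      have := Jf_nonneg ht |u - u₂ - K|
      positivity
    calc |gL s u₁ u| * |epsF t K u₂ u| * |χ u|
        ≤ 1 * ((Jf t |u - u₂| + Jf t |u - u₂ - K|) / K) * M := by
          apply mul_le_mul (mul_le_mul h1 h2 (abs_nonneg _) zero_le_one) h3 (abs_nonneg _)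
          positivity
      _ = M * ((Jf t |u - u₂| + Jf t |u - u₂ - K|) / K) := by ring
  have hB : Tendsto (fun K : ℝ => ∫ u, epsF s K u₁ u * gL t u₂ u * χ u) atTop (nhds 0) := by
    apply squeeze_zero_norm' ?_ (tendsto_cdiv (M * (2 * (∫ u : ℝ, Jf s |u|))))
    filter_upwards [eventually_gt_atTop (0:ℝ)] with K hK
    rw [← intB K hK]
    apply norm_integral_le_of_norm_le ((((J1.add (J1K K)).div_const K)).const_mul M)
    filter_upwards with u
    rw [Real.norm_eq_abs, abs_mul, abs_mul]
    have h1 := epsF_abs_le hs hK u₁ u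
    have h2 := gL_abs_le_one ht u₂ u
    have h3 := hχb u
    have hnn : 0 ≤ (Jf s |u - u₁| + Jf s |u - u₁ - K|) / K := by
      have := Jf_nonneg hs |u - u₁|
      have := Jf_nonneg hs |u - u₁ - K|
      positivity
    calc |epsF s K u₁ u| * |gL t u₂ u| * |χ u|
        ≤ ((Jf s |u - u₁| + Jf s |u - u₁ - K|) / K) * 1 * M := by
          apply mul_le_mul (mul_le_mul h1 h2 (abs_nonneg _) hnn) h3 (abs_nonneg _)
          positivity
      _ = M * ((Jf s |u - u₁| + Jf s |u - u₁ - K|) / K) := by ring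
  have hC : Tendsto (fun K : ℝ => ∫ u, epsF s K u₁ u * epsF t K u₂ u * χ u) atTop (nhds 0) := by
    apply squeeze_zero_norm' ?_ (tendsto_cdiv (M * (2 * Jf t 0) * (2 * (∫ u : ℝ, Jf s |u|))))
    filter_upwards [eventually_ge_atTop (1:ℝ)] with K hK1
    have hK : (0:ℝ) < K := lt_of_lt_of_le one_pos hK1
    have hJ0 : 0 ≤ Jf t 0 := Jf_nonneg ht 0
    have step : ‖∫ u, epsF s K u₁ u * epsF t K u₂ u * χ u‖
        ≤ M * (2 * Jf t 0 / K) * (2 * (∫ u : ℝ, Jf s |u|)) / K := by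
      have hle : (∫ u, (M * (2 * Jf t 0 / K)) * ((Jf s |u - u₁| + Jf s |u - u₁ - K|) / K))
          = M * (2 * Jf t 0 / K) * (2 * (∫ u : ℝ, Jf s |u|)) / K := by
        rw [integral_const_mul]
        have h0 : (∫ u, (Jf s |u - u₁| + Jf s |u - u₁ - K|) / K)
            = (∫ u, Jf s |u - u₁| + Jf s |u - u₁ - K|) / K := by rw [integral_div]
        have h2 : (∫ u, Jf s |u - u₁ - K|) = ∫ u : ℝ, Jf s |u| := by
          rw [← transJ s (u₁ + K)]
          congr 1; funext u; rw [show u - (u₁ + K) = u - u₁ - K by ring]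
        rw [h0, integral_add J1 (J1K K), transJ s u₁, h2]
        ring
      rw [← hle]
      apply norm_integral_le_of_norm_le ((((J1.add (J1K K)).div_const K)).const_mul
        (M * (2 * Jf t 0 / K)))
      filter_upwards with u
      rw [Real.norm_eq_abs, abs_mul, abs_mul]
      have h1 := epsF_abs_le hs hK u₁ u
      have h2 := epsF_abs_le' ht hK u₂ u
      have h3 := hχb u
      have hnn : 0 ≤ (Jf s |u - u₁| + Jf s |u - u₁ - K|) / K := by
        have := Jf_nonneg hs |u - u₁|
        have := Jf_nonneg hs |u - u₁ - K|
        positivity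
      calc |epsF s K u₁ u| * |epsF t K u₂ u| * |χ u|
          ≤ ((Jf s |u - u₁| + Jf s |u - u₁ - K|) / K) * (2 * Jf t 0 / K) * M := by
            apply mul_le_mul (mul_le_mul h1 h2 (abs_nonneg _) hnn) h3 (abs_nonneg _)
            positivity
        _ = (M * (2 * Jf t 0 / K)) * ((Jf s |u - u₁| + Jf s |u - u₁ - K|) / K) := by ring
    refine step.trans ?_
    have hKinv : 2 * Jf t 0 / K ≤ 2 * Jf t 0 := by
      rw [div_le_iff₀ hK]
      nlinarith
    have h1 : M * (2 * Jf t 0 / K) ≤ M * (2 * Jf t 0) :=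
      mul_le_mul_of_nonneg_left hKinv hM
    have h2 : M * (2 * Jf t 0 / K) * (2 * (∫ u : ℝ, Jf s |u|))
        ≤ M * (2 * Jf t 0) * (2 * (∫ u : ℝ, Jf s |u|)) :=
      mul_le_mul_of_nonneg_right h1 (by linarith)
    gcongr ?_ / K
  -- assemble
  have decomp : (fun K : ℝ => (∫ u, gL s u₁ u * gL t u₂ u * χ u)
        - (∫ u, gL s u₁ u * epsF t K u₂ u * χ u)
        - (∫ u, epsF s K u₁ u * gL t u₂ u * χ u)
        + ∫ u, epsF s K u₁ u * epsF t K u₂ u * χ u)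
      =ᶠ[atTop] fun K : ℝ =>
        ∫ u : ℝ, (heatSg s (G K u₁) u - G K u₁ u) * (heatSg t (G K u₂) u - G K u₂ u) * χ u := by
    filter_upwards [eventually_gt_atTop (0:ℝ)] with K hK
    exact (hFK K hK).symm
  have final : Tendsto (fun K : ℝ => (∫ u, gL s u₁ u * gL t u₂ u * χ u)
        - (∫ u, gL s u₁ u * epsF t K u₂ u * χ u)
        - (∫ u, epsF s K u₁ u * gL t u₂ u * χ u)
        + ∫ u, epsF s K u₁ u * epsF t K u₂ u * χ u) atTop
      (nhds ((∫ u, gL s u₁ u * gL t u₂ u * χ u) - 0 - 0 + 0)) :=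
    ((tendsto_const_nhds.sub hA).sub hB).add hC
  have final2 := final.congr' decomp
  rw [sub_zero, sub_zero, add_zero, hregion] at final2
  exact final2
end

section
/- Let t > 0, let u₁, u₂ ∈ ℝ, and let χ : ℝ → ℝ be bounded and continuous. Then the limit as ε → 0⁺ of ∫_ℝ (T_t ι^ε_{u₁})(u) · ι^ε_{u₂}(u) · χ(u) du exists and equals p_t(u₁, u₂) · χ(u₂). -/
lemma hk_cont (t : ℝ) : Continuous fun p : ℝ × ℝ => hk t p.1 p.2 := by
  unfold hk; fun_prop

lemma hk_symm (t x y : ℝ) : hk t x y = hk t y x := by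
  unfold hk; ring_nf

lemma avg (f : ℝ → ℝ) {ε : ℝ} (hε : 0 < ε) (a : ℝ) :
    ∫ y : ℝ, f y * iot ε a y = ∫ r in (0:ℝ)..1, f (a + ε * r) := by
  have h1 : (fun y => f y * iot ε a y)
      = Set.indicator (Set.Icc a (a + ε)) (fun y => ε⁻¹ * f y) := by
    funext y
    simp only [iot, Set.indicator_apply]
    split <;> simp [mul_comm]
  rw [h1, MeasureTheory.integral_indicator measurableSet_Icc,
    MeasureTheory.integral_Icc_eq_integral_Ioc,
    ← intervalIntegral.integral_of_le (by linarith : a ≤ a + ε)]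
  have h2 := intervalIntegral.integral_comp_mul_add f (ne_of_gt hε) a (a := 0) (b := 1)
  simp only [mul_zero, zero_add, mul_one] at h2
  have h3 : ∫ r in (0:ℝ)..1, f (a + ε * r) = ∫ r in (0:ℝ)..1, f (ε * r + a) := by
    congr 1; funext r; ring_nf
  rw [h3, h2, intervalIntegral.integral_const_mul, smul_eq_mul, add_comm ε a]


/-- Limit of the static part of the covariance of two occupation times: as `ε → 0⁺`,
`∫ (T_t ι^ε_{u₁}) ι^ε_{u₂} χ` converges to `p_t(u₁,u₂) χ(u₂)`. -/
theorem stmt15 (t : ℝ) (ht : 0 < t) (u₁ u₂ : ℝ)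
    (χ : ℝ → ℝ) (hχc : Continuous χ) (M : ℝ) (hχb : ∀ u, |χ u| ≤ M) :
    Filter.Tendsto (fun ε : ℝ => ∫ u : ℝ, heatSg t (iot ε u₁) u * iot ε u₂ u * χ u)
      (nhdsWithin 0 (Set.Ioi 0)) (nhds (hk t u₁ u₂ * χ u₂)) := by
  set g : ℝ → ℝ := fun ε =>
    ∫ s in (0:ℝ)..1, (∫ r in (0:ℝ)..1, hk t (u₂ + ε * s) (u₁ + ε * r)) * χ (u₂ + ε * s) with hg
  have hH : Continuous fun p : ℝ × ℝ => ∫ r in (0:ℝ)..1, hk t (u₂ + p.1 * p.2) (u₁ + p.1 * r) := by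
    apply intervalIntegral.continuous_parametric_intervalIntegral_of_continuous'
      (f := fun (p : ℝ × ℝ) r => hk t (u₂ + p.1 * p.2) (u₁ + p.1 * r))
    have := hk_cont t
    fun_prop
  have hgc : Continuous g := by
    apply intervalIntegral.continuous_parametric_intervalIntegral_of_continuous'
      (f := fun (ε : ℝ) s => (∫ r in (0:ℝ)..1, hk t (u₂ + ε * s) (u₁ + ε * r)) * χ (u₂ + ε * s))
    apply Continuous.mul
    · exact hH
    · fun_prop
  have hg0 : g 0 = hk t u₁ u₂ * χ u₂ := by
    simp [hg, intervalIntegral.integral_const, hk_symm t u₂ u₁]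
  have key : Filter.Tendsto g (nhdsWithin 0 (Set.Ioi 0)) (nhds (hk t u₁ u₂ * χ u₂)) := by
    rw [← hg0]
    exact (hgc.continuousAt.tendsto).mono_left nhdsWithin_le_nhds
  apply key.congr'
  filter_upwards [self_mem_nhdsWithin] with ε (hε : ε ∈ Set.Ioi 0)
  rw [Set.mem_Ioi] at hε
  have step1 : (fun u => heatSg t (iot ε u₁) u * iot ε u₂ u * χ u)
      = fun u => (heatSg t (iot ε u₁) u * χ u) * iot ε u₂ u := by
    funext u; ring
  calc g ε = ∫ s in (0:ℝ)..1, heatSg t (iot ε u₁) (u₂ + ε * s) * χ (u₂ + ε * s) := by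
        apply intervalIntegral.integral_congr
        intro s _
        show (∫ r in (0:ℝ)..1, hk t (u₂ + ε * s) (u₁ + ε * r)) * χ (u₂ + ε * s)
            = heatSg t (iot ε u₁) (u₂ + ε * s) * χ (u₂ + ε * s)
        rw [show heatSg t (iot ε u₁) (u₂ + ε * s) = ∫ y : ℝ, hk t (u₂ + ε * s) y * iot ε u₁ y from rfl, avg _ hε]
      _ = ∫ u : ℝ, (heatSg t (iot ε u₁) u * χ u) * iot ε u₂ u :=
        (avg (fun u => heatSg t (iot ε u₁) u * χ u) hε u₂).symm
      _ = ∫ u : ℝ, heatSg t (iot ε u₁) u * iot ε u₂ u * χ u := by rw [← step1]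
end
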